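/- arXiv:1509.06402 — 6 statements merged into one kernel-verified Lean document; each statement's English description precedes it below -/
import Mathlib

section
/- For any given k ≥ 1 and any sequence (m_j)_{j<ω} of positive integers, there are numbers S_k(m_0, …, m_j) such that for any n < ω and any coloring c : [S_k(m_0)]^k × ∏_{j=1}^n S_k(m_0, …, m_j) → 2, there are sets H_j ⊆ S_k(m_0, …, m_j) for j ≤ n such that |H_j| = m_j and c is constant on [H_0]^k × ∏_{j=1}^n H_j. -/
/-!
`S_0` is a Ramsey number for `k`-sets and `m_0`, obtained by the Erdős–Rado argument: a large set
contains a large set on which the colour of a `(k+1)`-set depends only on its least element, and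
pigeonhole on that colour gives a homogeneous set. For the product, let `B_n` be the box of points
`(A, x)` with `A ⊆ S_0` and `x_j < S_j` for `1 ≤ j ≤ n`, and put `S_{n+1} = 2^{b_n} m_{n+1}` for a
recursively computed bound `b_n ≥ |B_n|`. Each value `v < S_{n+1}` of the last coordinate induces a
colouring of `B_n`, so `m_{n+1}` values induce the same one; the induction hypothesis applied to
that common colouring finishes the step.
-/

open Finset Function

section Ramsey

def RamseyBound (α κ : Type*) (k s N : ℕ) : Prop :=
  ∀ X : Finset α, N ≤ #X → ∀ c : Finset α → κ,
    ∃ H ⊆ X, #H = s ∧ ∃ ε, ∀ A ⊆ H, #A = k → c A = ε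

variable {α κ : Type*}

theorem ramseyBound_zero (s : ℕ) : RamseyBound α κ 0 s s := by
  intro X hX c
  obtain ⟨H, hHX, hH⟩ := exists_subset_card_eq hX
  exact ⟨H, hHX, hH, c ∅, fun A _ hA => by rw [card_eq_zero.mp hA]⟩

variable [LinearOrder α]

def IsMinHomogeneous (c : Finset α → κ) (k : ℕ) (T : Finset α) (e : α → κ) : Prop :=
  ∀ a ∈ T, ∀ A ⊆ T.filter (a < ·), #A = k → c (insert a A) = e a

theorem exists_isMinHomogeneous {k : ℕ} (hk : ∀ s, ∃ N, RamseyBound α κ k s N) (i : ℕ) :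
    ∃ N, ∀ X : Finset α, N ≤ #X → ∀ c : Finset α → κ,
      ∃ T ⊆ X, #T = i ∧ ∃ e, IsMinHomogeneous c k T e := by
  induction i with
  | zero =>
    exact ⟨0, fun X _ c => ⟨∅, empty_subset X, rfl, fun _ => c ∅, by simp [IsMinHomogeneous]⟩⟩
  | succ i ih =>
    obtain ⟨N, hN⟩ := ih
    obtain ⟨R, hR⟩ := hk N
    refine ⟨R + 1, fun X hX c => ?_⟩
    have hX₀ : X.Nonempty := card_pos.mp (by omega)
    set a := X.min' hX₀
    have haX : a ∈ X := X.min'_mem hX₀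
    obtain ⟨H, hHX, hH, εa, hεa⟩ :=
      hR (X.erase a) (by rw [card_erase_of_mem haX]; omega) (fun B => c (insert a B))
    obtain ⟨T, hTH, hT, e, he⟩ := hN H hH.ge c
    have hlt : ∀ b ∈ T, a < b := fun b hb => X.min'_lt_of_mem_erase_min' hX₀ (hHX (hTH hb))
    have haT : a ∉ T := fun h => lt_irrefl a (hlt a h)
    refine ⟨insert a T, insert_subset haX ((hTH.trans hHX).trans (erase_subset a X)),
      by rw [card_insert_of_notMem haT, hT], update e a εa, ?_⟩
    rintro b hb A hA hAk
    rcases mem_insert.mp hb with rfl | hbT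
    · rw [filter_insert, if_neg (lt_irrefl _), filter_true_of_mem hlt] at hA
      rw [update_self]
      exact hεa A (hA.trans hTH) hAk
    · rw [filter_insert, if_neg (lt_asymm (hlt b hbT))] at hA
      rw [update_of_ne (hlt b hbT).ne']
      exact he b hbT A hA hAk

theorem exists_ramseyBound_succ [Fintype κ] {k : ℕ} (hk : ∀ s, ∃ N, RamseyBound α κ k s N)
    (s : ℕ) : ∃ N, RamseyBound α κ (k + 1) s N := by
  classical
  obtain ⟨N, hN⟩ := exists_isMinHomogeneous hk (Fintype.card κ * s)
  refine ⟨N, fun X hX c => ?_⟩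
  obtain ⟨T, hTX, hT, e, he⟩ := hN X hX c
  obtain ⟨ε, -, hε⟩ := exists_le_card_fiber_of_mul_le_card_of_maps_to
    (fun a _ => mem_univ (e a)) ⟨c ∅, mem_univ _⟩ (by rw [card_univ, hT])
  obtain ⟨H, hHT, hH⟩ := exists_subset_card_eq hε
  refine ⟨H, (hHT.trans (filter_subset _ T)).trans hTX, hH, ε, fun A hAH hAk => ?_⟩
  have hA₀ : A.Nonempty := card_pos.mp (by omega)
  set a := A.min' hA₀
  have haA : a ∈ A := A.min'_mem hA₀
  obtain ⟨haT, hea⟩ := mem_filter.mp (hHT (hAH haA))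
  have hrest : A.erase a ⊆ T.filter (a < ·) := fun b hb =>
    mem_filter.mpr ⟨filter_subset _ T (hHT (hAH (mem_of_mem_erase hb))),
      A.min'_lt_of_mem_erase_min' hA₀ hb⟩
  calc c A = c (insert a (A.erase a)) := by rw [insert_erase haA]
    _ = e a := he a haT _ hrest (by rw [card_erase_of_mem haA]; omega)
    _ = ε := hea

theorem exists_ramseyBound [Fintype κ] (k s : ℕ) : ∃ N, RamseyBound α κ k s N := by
  induction k generalizing s with
  | zero => exact ⟨s, ramseyBound_zero s⟩
  | succ k ih => exact exists_ramseyBound_succ ih s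

end Ramsey

theorem exists_subset_card_eq_forall_eq_on {β γ κ : Type*} [Fintype κ] [Nonempty κ]
    (P : Finset β) (V : Finset γ) {m : ℕ} (hV : Fintype.card κ ^ #P * m ≤ #V)
    (c : β → γ → κ) : ∃ H ⊆ V, #H = m ∧ ∃ f : β → κ, ∀ v ∈ H, ∀ p ∈ P, c p v = f p := by
  classical
  obtain ⟨y, -, hy⟩ := exists_le_card_fiber_of_mul_le_card_of_maps_to
    (f := fun v (p : P) => c p v) (fun v _ => mem_univ _) univ_nonempty
    (by simpa [Fintype.card_fun] using hV)
  obtain ⟨H, hHV, hH⟩ := exists_subset_card_eq hy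
  refine ⟨H, hHV.trans (filter_subset _ V), hH,
    fun p => if hp : p ∈ P then y ⟨p, hp⟩ else Classical.arbitrary κ, fun v hv p hp => ?_⟩
  simp only [dif_pos hp]
  exact congrFun (mem_filter.mp (hHV hv)).2 ⟨p, hp⟩

section Product

open Classical in
/-- Points `(A, x)` with `A ⊆ range (S 0)`, `x j < S j` for `1 ≤ j ≤ n`, and `x j = 0` otherwise. -/
noncomputable def productBox (S : ℕ → ℕ) : ℕ → Finset (Finset ℕ × (ℕ → ℕ))
  | 0 => (range (S 0)).powerset ×ˢ {0}
  | n + 1 => (productBox S n ×ˢ range (S (n + 1))).image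
      fun p => (p.1.1, update p.1.2 (n + 1) p.2)

theorem mk_mem_productBox {S : ℕ → ℕ} {n : ℕ} {A : Finset ℕ} {x : ℕ → ℕ} (hA : A ⊆ range (S 0))
    (hx : ∀ j, 1 ≤ j → j ≤ n → x j < S j) (hx₀ : x 0 = 0) (hx' : ∀ j, n < j → x j = 0) :
    (A, x) ∈ productBox S n := by
  induction n generalizing x with
  | zero =>
    obtain rfl : x = 0 := funext fun j => by
      rcases j with _ | j
      exacts [hx₀, hx' _ j.succ_pos]
    simpa [productBox] using hA
  | succ n ih =>
    have hmem : (A, update x (n + 1) 0) ∈ productBox S n := by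
      refine ih (fun j hj hjn => ?_) ?_ (fun j hj => ?_) <;>
        simp only [update_apply] <;> split_ifs <;> grind
    simp only [productBox, mem_image, mem_product, mem_range]
    exact ⟨((A, update x (n + 1) 0), x (n + 1)), ⟨hmem, hx _ (by omega) le_rfl⟩, by simp⟩

variable (R : ℕ) (m : ℕ → ℕ)

def boxCardBound : ℕ → ℕ
  | 0 => 2 ^ R
  | n + 1 => boxCardBound n * (2 ^ boxCardBound n * m (n + 1))

def sideLength : ℕ → ℕ
  | 0 => R
  | n + 1 => 2 ^ boxCardBound R m n * m (n + 1)

theorem card_productBox_le (n : ℕ) : #(productBox (sideLength R m) n) ≤ boxCardBound R m n := by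
  induction n with
  | zero => simp [productBox, sideLength, boxCardBound]
  | succ n ih =>
    classical
    calc #(productBox (sideLength R m) (n + 1))
        ≤ #(productBox (sideLength R m) n) * sideLength R m (n + 1) := by
          simp only [productBox]
          convert card_image_le using 2
          rw [card_product, card_range]
      _ ≤ boxCardBound R m (n + 1) := Nat.mul_le_mul_right _ ih

theorem exists_product_homogeneous {k : ℕ} (hR : RamseyBound ℕ Bool k (m 0) R) (n : ℕ)
    (c : Finset ℕ → (ℕ → ℕ) → Bool) :
    ∃ H : ℕ → Finset ℕ,
      (∀ j, j ≤ n → H j ⊆ range (sideLength R m j) ∧ #(H j) = m j) ∧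
      ∃ ε : Bool, ∀ A : Finset ℕ, A ⊆ H 0 → #A = k →
        ∀ x : ℕ → ℕ, (∀ j, 1 ≤ j → j ≤ n → x j ∈ H j) →
          x 0 = 0 → (∀ j, n < j → x j = 0) → c A x = ε := by
  induction n generalizing c with
  | zero =>
    obtain ⟨H, hH, hHcard, ε, hε⟩ := hR (range R) (by simp) (fun A => c A 0)
    refine ⟨fun _ => H, fun j hj => ?_, ε, fun A hA hAk x _ hx₀ hx => ?_⟩
    · obtain rfl : j = 0 := by omega
      exact ⟨hH, hHcard⟩
    · obtain rfl : x = 0 := funext fun j => by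
        rcases j with _ | j
        exacts [hx₀, hx _ j.succ_pos]
      exact hε A hA hAk
  | succ n ih =>
    set S := sideLength R m
    obtain ⟨L, hL, hLcard, f, hf⟩ := exists_subset_card_eq_forall_eq_on (productBox S n)
      (range (S (n + 1))) (m := m (n + 1)) (c := fun p v => c p.1 (update p.2 (n + 1) v)) (by
        rw [card_range, Fintype.card_bool]
        exact Nat.mul_le_mul_right _ (Nat.pow_le_pow_right two_pos (card_productBox_le R m n)))
    obtain ⟨H, hH, ε, hε⟩ := ih fun A x => f (A, x)
    refine ⟨update H (n + 1) L, fun j hj => ?_, ε, fun A hA hAk x hx hx₀ hx' => ?_⟩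
    · rcases hj.lt_or_eq with hj | rfl
      · rw [update_of_ne (by omega)]
        exact hH j (by omega)
      · rw [update_self]
        exact ⟨hL, hLcard⟩
    rw [update_of_ne (by omega)] at hA
    have hxH : ∀ j, 1 ≤ j → j ≤ n → x j ∈ H j := fun j hj hjn => by
      simpa [update_of_ne (show j ≠ n + 1 by omega)] using hx j hj (by omega)
    set y := update x (n + 1) 0
    have hy : ∀ j, 1 ≤ j → j ≤ n → y j ∈ H j := fun j hj hjn => by
      simpa [y, update_of_ne (show j ≠ n + 1 by omega)] using hxH j hj hjn
    have hy' : ∀ j, n < j → y j = 0 := fun j hj => by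
      by_cases h : j = n + 1
      · simp [y, h]
      · simp [y, h, hx' j (by omega)]
    have hy₀ : y 0 = 0 := by simp [y, hx₀]
    have hbox : (A, y) ∈ productBox S n :=
      mk_mem_productBox (hA.trans (hH 0 (by omega)).1)
        (fun j hj hjn => mem_range.mp ((hH j hjn).1 (hy j hj hjn))) hy₀ hy'
    calc c A x = c A (update y (n + 1) (x (n + 1))) := by simp [y]
      _ = f (A, y) := hf _ (by simpa using hx (n + 1) (by omega) le_rfl) _ hbox
      _ = ε := hε A hA hAk y hy hy₀ hy'

end Product

theorem stmt2_general (k : ℕ) (m : ℕ → ℕ) :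
    ∃ S : ℕ → ℕ,
      ∀ n : ℕ, ∀ c : Finset ℕ → (ℕ → ℕ) → Bool,
        ∃ H : ℕ → Finset ℕ,
          (∀ j, j ≤ n → H j ⊆ Finset.range (S j) ∧ (H j).card = m j) ∧
          ∃ ε : Bool, ∀ A : Finset ℕ, A ⊆ H 0 → A.card = k →
            ∀ x : ℕ → ℕ, (∀ j, 1 ≤ j → j ≤ n → x j ∈ H j) →
              x 0 = 0 → (∀ j, n < j → x j = 0) →
              c A x = ε := by
  obtain ⟨R, hR⟩ := exists_ramseyBound (α := ℕ) (κ := Bool) k (m 0)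
  exact ⟨sideLength R m, exists_product_homogeneous R m hR⟩

theorem stmt2 (k : ℕ) (hk : 1 ≤ k) (m : ℕ → ℕ) (hm : ∀ j, 1 ≤ m j) :
    ∃ S : ℕ → ℕ,
      ∀ n : ℕ, ∀ c : Finset ℕ → (ℕ → ℕ) → Bool,
        ∃ H : ℕ → Finset ℕ,
          (∀ j, j ≤ n → H j ⊆ Finset.range (S j) ∧ (H j).card = m j) ∧
          ∃ ε : Bool, ∀ A : Finset ℕ, A ⊆ H 0 → A.card = k →
            ∀ x : ℕ → ℕ, (∀ j, 1 ≤ j → j ≤ n → x j ∈ H j) →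
              x 0 = 0 → (∀ j, n < j → x j = 0) →
              c A x = ε :=
  stmt2_general k m
end

section
/- Given k ≥ 1 and n < ω, there is a function S_{k,n} : [ℕ⁺]^{≤n+1} → ℕ⁺ (depending on both k and n) such that for each sequence (m_j)_{j≤n} of positive integers and each coloring c : ⋃_{l≤n} ([S_{k,n}(m_0, …, m_l)]^k × ∏_{j∈(n+1)∖{l}} S_{k,n}(m_0, …, m_j)) → 2, there are subsets H_j ⊆ S_{k,n}(m_0, …, m_j) with |H_j| = m_j for each j ≤ n, such that for each l ≤ n, c is constant on [H_l]^k × ∏_{j∈(n+1)∖{l}} H_j. -/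
/-!
Induction on the number `n` of coordinates, for arbitrary finite colour sets and with an extra
colouring `g` of the whole product `∏_{j<n} H_j` that is also made constant. To add the last
coordinate `n`, colour each `k`-set `A` of a long initial segment by the function
`x ↦ c_n(A, x)` on the box of possible lower points and make it independent of `A` by Ramsey's
theorem; then thin out by pigeonhole to a set `Y` of size `m_n` of values `v` on which all lower
colourings with last coordinate `v` coincide. Fix `v₀ ∈ Y` and apply the induction hypothesis to
the lower colourings at `v₀`, and to `g` at `v₀` paired with the residual colouring of the last
coordinate. Only the last segment depends on `m_n`, so `S` depends on prefixes of `m` only.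
-/

open Finset Function

section Ramsey

variable (α κ : Type*) [LinearOrder α]

lemma exists_monochromatic_subset_of_mul_lt_card {β : Type*} [Finite κ] {X : Finset β}
    {M : ℕ} (f : β → κ) (h : Nat.card κ * M < #X) :
    ∃ Y ⊆ X, #Y = M ∧ ∃ ε, ∀ u ∈ Y, f u = ε := by
  classical
  cases nonempty_fintype κ
  obtain ⟨ε, -, hε⟩ := exists_lt_card_fiber_of_mul_lt_card_of_maps_to (t := univ)
    (fun a _ => mem_univ (f a)) (by simpa [Nat.card_eq_fintype_card] using h)
  obtain ⟨Y, hY, hYcard⟩ := exists_subset_card_eq hε.le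
  exact ⟨Y, hY.trans (filter_subset _ _), hYcard, ε, fun u hu => (mem_filter.1 (hY hu)).2⟩

def IsRamseyBound (k M N : ℕ) : Prop :=
  ∀ X : Finset α, N ≤ #X → ∀ c : Finset α → κ,
    ∃ Y ⊆ X, #Y = M ∧ ∃ ε, ∀ A ⊆ Y, #A = k → c A = ε

variable {α κ}

lemma exists_endHomogeneous_subset {k : ℕ} (hk : ∀ M, ∃ N, IsRamseyBound α κ k M N)
    (t : ℕ) : ∃ N, ∀ X : Finset α, N ≤ #X → ∀ c : Finset α → κ, ∃ T ⊆ X, #T = t ∧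
      ∃ e : α → κ, ∀ a ∈ T, ∀ B ⊆ T.filter (a < ·), #B = k → c (insert a B) = e a := by
  induction t with
  | zero => exact ⟨0, fun X _ c => ⟨∅, empty_subset X, rfl, fun _ => c ∅, by simp⟩⟩
  | succ t ih =>
    obtain ⟨Nt, hNt⟩ := ih
    obtain ⟨R, hR⟩ := hk Nt
    refine ⟨R + 1, fun X hX c => ?_⟩
    have hXne : X.Nonempty := card_pos.1 (by omega)
    set a₀ := X.min' hXne
    obtain ⟨Y, hYX, hYcard, ε₀, hε₀⟩ := hR (X.erase a₀)
      (by rw [card_erase_of_mem (min'_mem X hXne)]; omega) (fun B => c (insert a₀ B))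
    obtain ⟨T, hTY, hTcard, e, he⟩ := hNt Y hYcard.ge c
    have ha₀T : ∀ b ∈ T, a₀ < b := fun b hb => X.min'_lt_of_mem_erase_min' hXne (hYX (hTY hb))
    refine ⟨insert a₀ T, insert_subset (min'_mem X hXne) (hTY.trans (hYX.trans (erase_subset _ _))),
      by rw [card_insert_of_notMem fun h => (ha₀T a₀ h).false, hTcard], update e a₀ ε₀, ?_⟩
    intro a ha B hB hBk
    have hBT : ∀ b ∈ B, b ∈ T ∧ a < b := fun b hb => by
      obtain ⟨hb, hab⟩ := mem_filter.1 (hB hb)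
      refine ⟨(mem_insert.1 hb).resolve_left ?_, hab⟩
      rintro rfl
      rcases mem_insert.1 ha with rfl | haT
      exacts [hab.false, (ha₀T a haT).asymm hab]
    rcases mem_insert.1 ha with rfl | haT
    · rw [update_self]
      exact hε₀ B (fun b hb => hTY (hBT b hb).1) hBk
    · rw [update_of_ne (ha₀T a haT).ne']
      exact he a haT B (fun b hb => mem_filter.2 (hBT b hb)) hBk

variable (α κ) in
theorem exists_isRamseyBound [Finite κ] (k M : ℕ) : ∃ N, IsRamseyBound α κ k M N := by
  induction k generalizing M with
  | zero =>
    refine ⟨M, fun X hX c => ?_⟩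
    obtain ⟨Y, hYX, hYcard⟩ := exists_subset_card_eq hX
    exact ⟨Y, hYX, hYcard, c ∅, fun A _ hA => by rw [card_eq_zero.1 hA]⟩
  | succ k ih =>
    obtain ⟨N, hN⟩ := exists_endHomogeneous_subset ih (Nat.card κ * M + 1)
    refine ⟨N, fun X hX c => ?_⟩
    obtain ⟨T, hTX, hTcard, e, he⟩ := hN X hX c
    obtain ⟨Y, hYT, hYcard, ε, hε⟩ :=
      exists_monochromatic_subset_of_mul_lt_card κ e (X := T) (M := M) (by omega)
    refine ⟨Y, hYT.trans hTX, hYcard, ε, fun A hA hAk => ?_⟩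
    have hAne : A.Nonempty := card_pos.1 (by omega)
    have ha := min'_mem A hAne
    -- `A` is its minimum followed by a `k`-set of larger elements
    rw [← insert_erase ha, he _ (hYT (hA ha)) _ (fun b hb => mem_filter.2
        ⟨hYT (hA (mem_of_mem_erase hb)), A.min'_lt_of_mem_erase_min' hAne hb⟩)
        (by rw [card_erase_of_mem ha, hAk]; rfl), hε _ (hA ha)]

end Ramsey

section Polarized

universe u

def boxOf (n : ℕ) (H : ℕ → Finset ℕ) : Set (ℕ → ℕ) :=
  {x | (∀ j < n, x j ∈ H j) ∧ ∀ j, n ≤ j → x j = 0}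

instance (n : ℕ) (H : ℕ → Finset ℕ) : Finite (boxOf n H) :=
  Finite.of_injective (fun x (j : Fin n) => (⟨x.1 j, x.2.1 j j.2⟩ : H j)) fun x y hxy => by
    ext j
    by_cases hj : j < n
    · simpa using congrFun hxy ⟨j, hj⟩
    · rw [x.2.2 j (not_lt.1 hj), y.2.2 j (not_lt.1 hj)]

lemma boxOf_mono {n : ℕ} {H H' : ℕ → Finset ℕ} (h : ∀ j < n, H j ⊆ H' j) :
    boxOf n H ⊆ boxOf n H' :=
  fun _ hx => ⟨fun j hj => h j hj (hx.1 j hj), hx.2⟩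

lemma mem_boxOf_succ {n : ℕ} {H : ℕ → Finset ℕ} {x : ℕ → ℕ} :
    x ∈ boxOf (n + 1) H ↔ update x n 0 ∈ boxOf n H ∧ x n ∈ H n := by
  simp only [boxOf, Set.mem_ofPred_eq, update_apply]
  constructor
  · rintro ⟨hH, h0⟩
    refine ⟨⟨fun j hj => ?_, fun j hj => ?_⟩, hH n n.lt_succ_self⟩
    · rw [if_neg hj.ne]; exact hH j (by omega)
    · split_ifs with hjn
      · rfl
      · exact h0 j (by omega)
  · rintro ⟨⟨hH, h0⟩, hn⟩
    refine ⟨fun j hj => ?_, fun j hj => ?_⟩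
    · rcases (Nat.lt_succ_iff.1 hj).eq_or_lt with rfl | hj
      · exact hn
      · simpa [hj.ne] using hH j hj
    · simpa [show j ≠ n by omega] using h0 j (by omega)

variable (κ κ' : Type*) [Finite κ] [Finite κ']

theorem exists_last_coordinate_reduction (k n M : ℕ) (U : Finset ℕ) :
    ∃ N, ∀ (c : ℕ → Finset ℕ → (ℕ → ℕ) → κ) (g : (ℕ → ℕ) → κ'),
      ∃ Y ⊆ range N, #Y = M ∧ ∃ F : (ℕ → ℕ) → κ,
        (∀ A ⊆ Y, #A = k → ∀ x ∈ boxOf n (fun _ => U), c n A x = F x) ∧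
        ∀ u ∈ Y, ∀ v ∈ Y, ∀ x ∈ boxOf n (fun _ => U),
          (∀ l < n, ∀ A ⊆ U, c l A (update x n u) = c l A (update x n v)) ∧
          g (update x n u) = g (update x n v) := by
  set X := boxOf n (fun _ => U)
  obtain ⟨N, hN⟩ := exists_isRamseyBound ℕ (X → κ) k
    (Nat.card ((Fin n → U.powerset → X → κ) × (X → κ')) * M + 1)
  refine ⟨N, fun c g => ?_⟩
  obtain ⟨Z, hZ, hZcard, F, hF⟩ := hN (range N) (by simp) (fun A x => c n A x)
  obtain ⟨Y, hYZ, hYcard, φ, hφ⟩ := exists_monochromatic_subset_of_mul_lt_card _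
    (fun v => ((fun l A x => c l A (update x n v) : Fin n → U.powerset → X → κ),
      (fun x => g (update x n v) : X → κ'))) (X := Z) (M := M) (by omega)
  -- off the box the values of `F` are irrelevant
  refine ⟨Y, hYZ.trans hZ, hYcard, extend Subtype.val F (c n ∅), fun A hA hAk x hx => ?_,
    fun u hu v hv x hx => ⟨fun l hl A hA => ?_, ?_⟩⟩
  · exact (congrFun (hF A (hA.trans hYZ) hAk) ⟨x, hx⟩).trans
      (Subtype.val_injective.extend_apply F _ ⟨x, hx⟩).symm
  · exact congrArg (fun φ => φ.1 ⟨l, hl⟩ ⟨A, mem_powerset.2 hA⟩ ⟨x, hx⟩)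
      ((hφ u hu).trans (hφ v hv).symm)
  · exact congrArg (fun φ => φ.2 ⟨x, hx⟩) ((hφ u hu).trans (hφ v hv).symm)

/-- Points of a product are functions vanishing from coordinate `n` on; for the colouring
`c l` the `l`-th coordinate, which carries the `k`-set `A`, is set to `0`. -/
def IsPolarizedBound (k n : ℕ) (S : List ℕ → ℕ) : Prop :=
  ∀ m : ℕ → ℕ, (∀ j, 1 ≤ m j) → ∀ (c : ℕ → Finset ℕ → (ℕ → ℕ) → κ) (g : (ℕ → ℕ) → κ'),
    ∃ H : ℕ → Finset ℕ,
      (∀ j < n, H j ⊆ range (S ((List.range (j + 1)).map m)) ∧ #(H j) = m j) ∧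
      (∀ l < n, ∃ ε, ∀ A ⊆ H l, #A = k → ∀ x ∈ boxOf n (update H l {0}), c l A x = ε) ∧
      ∃ ε, ∀ x ∈ boxOf n H, g x = ε

variable {κ κ'}

lemma take_map_range {m : ℕ → ℕ} {i n : ℕ} (h : i ≤ n) :
    ((List.range n).map m).take i = (List.range i).map m := by
  rw [← List.map_take, List.take_range, min_eq_left h]

theorem IsPolarizedBound.exists_succ {k n : ℕ} {S' : List ℕ → ℕ} (hS'pos : ∀ s, 1 ≤ S' s)
    (hS' : IsPolarizedBound κ (κ' × κ) k n S') :
    ∃ S, (∀ s, 1 ≤ S s) ∧ IsPolarizedBound κ κ' k (n + 1) S := by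
  choose N hN using fun U M => exists_last_coordinate_reduction κ κ' k n M U
  let B : List ℕ → ℕ := fun s => (range n).sup fun j => S' (s.take (j + 1))
  refine ⟨fun s => if s.length = n + 1 then max 1 (N (range (B s)) (s.getD n 0)) else S' s,
    fun s => by dsimp only; split_ifs; exacts [le_max_left _ _, hS'pos s], fun m hm c g => ?_⟩
  set U := range (B ((List.range (n + 1)).map m))
  have hSU : ∀ j < n, range (S' ((List.range (j + 1)).map m)) ⊆ U := fun j hj =>
    range_subset_range.2 <| by
      rw [← take_map_range (by omega : j + 1 ≤ n + 1)]
      exact le_sup (f := fun j => S' (((List.range (n + 1)).map m).take (j + 1))) (mem_range.2 hj)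
  obtain ⟨Y, hYN, hYcard, F, hF, hY⟩ := hN U (m n) c g
  obtain ⟨v₀, hv₀⟩ : Y.Nonempty := card_pos.1 (hYcard ▸ hm n)
  obtain ⟨H, hH, hc, ε, hε⟩ :=
    hS' m hm (fun l A x => c l A (update x n v₀)) (fun x => (g (update x n v₀), F x))
  have hHU : ∀ j < n, H j ⊆ U := fun j hj => (hH j hj).1.trans (hSU j hj)
  refine ⟨update H n Y, fun j hj => ?_, fun l hl => ?_, ⟨ε.1, fun x hx => ?_⟩⟩
  · rcases (Nat.lt_succ_iff.1 hj).eq_or_lt with rfl | hj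
    · have hlast : ((List.range (j + 1)).map m).getD j 0 = m j := by simp
      simp only [update_self, List.length_map, List.length_range, if_true, hlast]
      exact ⟨hYN.trans (range_subset_range.2 (le_max_right _ _)), hYcard⟩
    · simp only [update_of_ne hj.ne, List.length_map, List.length_range, add_left_inj, hj.ne,
        if_false]
      exact hH j hj
  · rcases (Nat.lt_succ_iff.1 hl).eq_or_lt with rfl | hl
    · refine ⟨ε.2, fun A hA hAk x hx => ?_⟩
      rw [update_self] at hA
      obtain ⟨hx', hxl⟩ := mem_boxOf_succ.1 hx
      rw [update_self, mem_singleton] at hxl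
      rw [← hxl, update_eq_self] at hx'
      have hxH : x ∈ boxOf l H := boxOf_mono (fun j hj => by simp [hj.ne]) hx'
      rw [hF A hA hAk x (boxOf_mono hHU hxH)]
      exact congrArg Prod.snd (hε x hxH)
    · obtain ⟨ε', hε'⟩ := hc l hl
      refine ⟨ε', fun A hA hAk x hx => ?_⟩
      rw [update_of_ne hl.ne] at hA
      obtain ⟨hx', hxn⟩ := mem_boxOf_succ.1 hx
      rw [update_of_ne hl.ne', update_self] at hxn
      have hx'H : update x n 0 ∈ boxOf n (update H l {0}) :=
        boxOf_mono (fun j hj => by by_cases hjl : j = l <;> simp [hjl, hj.ne]) hx'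
      have hx'U : update x n 0 ∈ boxOf n (fun _ => U) := boxOf_mono (fun j hj => by
        by_cases hjl : j = l
        · simpa [hjl] using hSU l hl (mem_range.2 (hS'pos _))
        · simpa [hjl] using hHU j hj) hx'H
      calc c l A x = c l A (update (update x n 0) n (x n)) := by rw [update_idem, update_eq_self]
        _ = c l A (update (update x n 0) n v₀) :=
          (hY _ hxn v₀ hv₀ _ hx'U).1 l hl A (hA.trans (hHU l hl))
        _ = ε' := hε' A hA hAk _ hx'H
  · obtain ⟨hx', hxn⟩ := mem_boxOf_succ.1 hx
    rw [update_self] at hxn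
    have hx'H : update x n 0 ∈ boxOf n H := boxOf_mono (fun j hj => by simp [hj.ne]) hx'
    calc g x = g (update (update x n 0) n (x n)) := by rw [update_idem, update_eq_self]
      _ = g (update (update x n 0) n v₀) := (hY _ hxn v₀ hv₀ _ (boxOf_mono hHU hx'H)).2
      _ = ε.1 := congrArg Prod.fst (hε _ hx'H)

theorem exists_isPolarizedBound {κ κ' : Type u} [Finite κ] [Finite κ'] (k n : ℕ) :
    ∃ S, (∀ s, 1 ≤ S s) ∧ IsPolarizedBound κ κ' k n S := by
  induction n generalizing κ' with
  | zero =>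
    refine ⟨fun _ => 1, fun _ => le_rfl, fun m _ c g => ⟨fun _ => ∅, by simp, by simp, g 0, ?_⟩⟩
    exact fun x hx => congrArg g (funext fun j => hx.2 j j.zero_le)
  | succ n ih =>
    obtain ⟨S', hS'pos, hS'⟩ := ih (κ' := κ' × κ)
    exact hS'.exists_succ hS'pos

end Polarized

theorem stmt3_general (k : ℕ) (n : ℕ) :
    ∃ S : List ℕ → ℕ, (∀ s, 1 ≤ S s) ∧
      ∀ m : ℕ → ℕ, (∀ j, 1 ≤ m j) →
      ∀ c : ℕ → Finset ℕ → (ℕ → ℕ) → Bool,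
        ∃ H : ℕ → Finset ℕ,
          (∀ j, j ≤ n → H j ⊆ Finset.range (S ((List.range (j + 1)).map m)) ∧
            (H j).card = m j) ∧
          ∀ l, l ≤ n → ∃ ε : Bool,
            ∀ A : Finset ℕ, A ⊆ H l → A.card = k →
            ∀ x : ℕ → ℕ, (∀ j, j ≤ n → j ≠ l → x j ∈ H j) →
              (∀ j, n < j ∨ j = l → x j = 0) →
              c l A x = ε := by
  obtain ⟨S, hSpos, hS⟩ := exists_isPolarizedBound (κ := Bool) (κ' := Unit) k (n + 1)
  refine ⟨S, hSpos, fun m hm c => ?_⟩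
  obtain ⟨H, hH, hc, -⟩ := hS m hm c fun _ => ()
  refine ⟨H, fun j hj => hH j (Nat.lt_succ_of_le hj), fun l hl => ?_⟩
  obtain ⟨ε, hε⟩ := hc l (Nat.lt_succ_of_le hl)
  refine ⟨ε, fun A hA hAk x hx hx0 => hε A hA hAk x ⟨fun j hj => ?_, fun j hj => hx0 j (.inl hj)⟩⟩
  by_cases hjl : j = l
  · simp [hjl, hx0 l (.inr rfl)]
  · simpa [hjl] using hx j (Nat.le_of_lt_succ hj) hjl

theorem stmt3 (k : ℕ) (hk : 1 ≤ k) (n : ℕ) :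
    ∃ S : List ℕ → ℕ, (∀ s, 1 ≤ S s) ∧
      ∀ m : ℕ → ℕ, (∀ j, 1 ≤ m j) →
      ∀ c : ℕ → Finset ℕ → (ℕ → ℕ) → Bool,
        ∃ H : ℕ → Finset ℕ,
          (∀ j, j ≤ n → H j ⊆ Finset.range (S ((List.range (j + 1)).map m)) ∧
            (H j).card = m j) ∧
          ∀ l, l ≤ n → ∃ ε : Bool,
            ∀ A : Finset ℕ, A ⊆ H l → A.card = k →
            ∀ x : ℕ → ℕ, (∀ j, j ≤ n → j ≠ l → x j ∈ H j) →
              (∀ j, n < j ∨ j = l → x j = 0) →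
              c l A x = ε :=
  stmt3_general k n
end

section
/- Let R_k : [ℕ⁺]^{<ω} → ℕ⁺ be a function as in the generalized product tree theorem (i.e., for each sequence (m_j) of positive integers and each 2-coloring of ⋃_{n<ω} ([R_k(m_0)]^k × ∏_{j=1}^n R_k(m_0, …, m_j)), there are H_j ⊆ R_k(m_0, …, m_j) with |H_j| = m_j on which the coloring is constant on [H_0]^k × ∏_{j=1}^n H_j for infinitely many n). Let L, N be infinite subsets of ω whose increasing enumerations satisfy l_0 ≤ n_0 < l_1 ≤ n_1 < ⋯. Let k ≥ 1, m_0 ≥ 1, and let K_j (j ≥ l_0) be nonempty sets with |K_{l_0}| = R_k(m_0), |K_{l_i}| ≥ i for each i ≥ 1, and |K_j| = 1 for each j ∈ (l_0, ω) ∖ L. Then for each coloring c : ⋃_{n∈N} ([K_{l_0}]^k × ∏_{j∈(l_0,n]} K_j) → 2 and each r < ω, there are infinite L′ ⊆ L and N′ ⊆ N with increasing enumerations satisfying l′_0 = l_0 ≤ n′_0 < l′_1 ≤ n′_1 < ⋯, and there are H_j ⊆ K_j such that |H_{l_0}| = m_0, |H_{l′_i}| = r + i for each i ≥ 1, |H_j|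 = 1 for each j ∈ (l_0, ω) ∖ L′, and c is constant on ⋃_{n∈N′} ([H_{l_0}]^k × ∏_{j∈(l_0,n]} H_j). -/
/-!
Choose a fast-growing `g` with `g 0 = 0` so that the level `K (l (g i))` has room for
`R (m 0, …, m i)` points, where `m 0 = m0` and `m i = r + i`. Identify an initial segment of
`ℕ` with part of each `K (l (g i))` and freeze every other coordinate at a single point; this
turns `c` into a coloring of the product tree indexed by `i`, to which the generalized product
tree theorem applies. Among its infinitely many monochromatic levels `t`, infinitely many share
one colour `ε`; enumerate them as `σ 0 < σ 1 < ⋯` and put `n' p = n (g (σ p))`,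
`l' (p + 1) = l (g (σ p + 1))`. Thinning the homogeneous set at `l (g (σ p + 1))` to `r + p + 1`
points and at every other new level to one point keeps `c` constant with value `ε`.
-/

open Function Set

namespace ProductTree

theorem exists_infinite_setOf_of_infinite_setOf_exists {ι α : Type*} [Finite ι]
    {p : α → ι → Prop} (h : {a | ∃ i, p a i}.Infinite) : ∃ i, {a | p a i}.Infinite := by
  by_contra! hfin
  exact h (by simpa only [ofPred_exists] using finite_iUnion hfin)

theorem _root_.Finset.exists_injOn_mapsTo_of_card_le {α β : Type*} [Nonempty β]
    {s : Finset α} {t : Finset β} (h : s.card ≤ t.card) :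
    ∃ e : α → β, InjOn e s ∧ MapsTo e s t := by
  obtain ⟨e, hmaps, hinj⟩ := s.finite_toSet.exists_injOn_of_encard_le (t := (t : Set β))
    (by simpa only [encard_coe_eq_coe_finsetCard, Nat.cast_le] using h)
  exact ⟨e, hinj, hmaps⟩

theorem exists_strictMono_le_comp (κ f : ℕ → ℕ) (hκ : ∀ i, 1 ≤ i → i ≤ κ i) (h0 : f 0 ≤ κ 0) :
    ∃ g : ℕ → ℕ, StrictMono g ∧ g 0 = 0 ∧ ∀ i, f i ≤ κ (g i) := by
  refine ⟨fun i => i + ∑ j ∈ Finset.range i, f (j + 1),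
    strictMono_nat_of_lt_succ fun i => by simp only [Finset.sum_range_succ]; omega,
    by simp, fun i => ?_⟩
  rcases i with _ | i
  · simpa using h0
  · have hf : f (i + 1) ≤ ∑ j ∈ Finset.range (i + 1), f (j + 1) :=
      Finset.single_le_sum (f := fun j => f (j + 1)) (by simp) (Finset.self_mem_range_succ i)
    exact (hf.trans (Nat.le_add_left _ _)).trans (hκ _ (by omega))

theorem exists_strictMono_injOn_mapsTo (K : ℕ → Finset ℕ) (l : ℕ → ℕ)
    (hKl : ∀ i, 1 ≤ i → i ≤ (K (l i)).card) (f : ℕ → ℕ) (h0 : f 0 ≤ (K (l 0)).card) :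
    ∃ g : ℕ → ℕ, ∃ e : ℕ → ℕ → ℕ, StrictMono g ∧ g 0 = 0 ∧ ∀ i,
      InjOn (e (l (g i))) (Finset.range (f i)) ∧
        MapsTo (e (l (g i))) (Finset.range (f i)) (K (l (g i))) := by
  obtain ⟨g, hg, hg0, hgK⟩ := exists_strictMono_le_comp (fun i => (K (l i)).card) f hKl h0
  choose e he_inj he_maps using fun j =>
    Finset.exists_injOn_mapsTo_of_card_le (s := Finset.range (K j).card) (t := K j) (by simp)
  have hsub i : (Finset.range (f i) : Set ℕ) ⊆ Finset.range (K (l (g i))).card := by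
    simpa using hgK i
  exact ⟨g, e, hg, hg0, fun i => ⟨(he_inj _).mono (hsub i), (he_maps _).mono_left (hsub i)⟩⟩

/-- `c` takes the value `ε` on `[H a]^k × ∏_{j ∈ (a, N]} H j`. -/
def Monochromatic (c : ℕ → Finset ℕ → (ℕ → ℕ) → Bool) (k a : ℕ) (H : ℕ → Finset ℕ) (N : ℕ)
    (ε : Bool) : Prop :=
  ∀ A : Finset ℕ, A ⊆ H a → A.card = k → ∀ x : ℕ → ℕ, (∀ j, a < j → j ≤ N → x j ∈ H j) →
    (∀ j, j ≤ a ∨ N < j → x j = 0) → c N A x = ε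

section Monochromatic

variable {c : ℕ → Finset ℕ → (ℕ → ℕ) → Bool} {k a N : ℕ} {H : ℕ → Finset ℕ} {ε : Bool}

theorem Monochromatic.anti {H' : ℕ → Finset ℕ} (h : Monochromatic c k a H N ε)
    (hH : ∀ j, H' j ⊆ H j) : Monochromatic c k a H' N ε :=
  fun A hA hAk x hx hx0 => h A (hA.trans (hH a)) hAk x (fun j ha hN => hH j (hx j ha hN)) hx0

theorem monochromatic_zero_iff : Monochromatic c k 0 H N ε ↔
    ∀ A : Finset ℕ, A ⊆ H 0 → A.card = k → ∀ x : ℕ → ℕ, (∀ j, 1 ≤ j → j ≤ N → x j ∈ H j) →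
      x 0 = 0 → (∀ j, N < j → x j = 0) → c N A x = ε := by
  simp only [Monochromatic, Nat.le_zero, or_imp, forall_and, forall_eq, and_imp]
  rfl

end Monochromatic

def Interleaved (a b : ℕ → ℕ) : Prop :=
  ∀ p, a p ≤ b p ∧ b p < a (p + 1)

namespace Interleaved

variable {a b a' b' : ℕ → ℕ}

theorem strictMono_left (h : Interleaved a b) : StrictMono a :=
  strictMono_nat_of_lt_succ fun p => (h p).1.trans_lt (h p).2

theorem strictMono_right (h : Interleaved a b) : StrictMono b :=
  strictMono_nat_of_lt_succ fun p => (h p).2.trans_le (h (p + 1)).1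

theorem of_strictMono (h : StrictMono a) : Interleaved a a :=
  fun p => ⟨le_rfl, h p.lt_succ_self⟩

theorem comp (h : Interleaved a b) (h' : Interleaved a' b') : Interleaved (a ∘ a') (b ∘ b') :=
  fun p => ⟨(h.strictMono_left.monotone (h' p).1).trans (h _).1,
    (h _).2.trans_le (h.strictMono_left.monotone (h' p).2)⟩

theorem le_iff (h : Interleaved a b) {i t : ℕ} : a i ≤ b t ↔ i ≤ t := by
  refine ⟨fun hit => ?_, fun hit => (h.strictMono_left.monotone hit).trans (h t).1⟩
  by_contra! hti
  exact absurd ((h t).2.trans_le (h.strictMono_left.monotone hti)) hit.not_gt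

end Interleaved

def shiftSucc (σ : ℕ → ℕ) : ℕ → ℕ
  | 0 => 0
  | p + 1 => σ p + 1

theorem interleaved_shiftSucc {σ : ℕ → ℕ} (hσ : StrictMono σ) : Interleaved (shiftSucc σ) σ
  | 0 => ⟨Nat.zero_le _, Nat.lt_succ_self _⟩
  | p + 1 => ⟨hσ p.lt_succ_self, Nat.lt_succ_self _⟩

theorem exists_thinning {α : Type*} (F : ℕ → Finset α) (r : ℕ)
    (hF : ∀ i, 0 < i → r + i ≤ (F i).card) {v : ℕ → ℕ} (hv : StrictMono v) :
    ∃ F' : ℕ → Finset α, (∀ i, F' i ⊆ F i) ∧ F' 0 = F 0 ∧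
      (∀ q, 0 < q → (F' (v q)).card = r + q) ∧ ∀ i, 0 < i → i ∉ range v → (F' i).card = 1 := by
  classical
  have hT : ∀ i, 0 < i → ∃ T ⊆ F i, T.card = if i ∈ range v then r + invFun v i else 1 := by
    intro i hi
    apply Finset.exists_subset_card_eq
    split_ifs with hiv
    · obtain ⟨q, rfl⟩ := hiv
      rw [leftInverse_invFun hv.injective q]
      exact (Nat.add_le_add_left hv.le_apply r).trans (hF _ hi)
    · exact (by omega : 1 ≤ r + i).trans (hF i hi)
  choose! T hTF hTcard using hT
  have hv0 : ∀ q, 0 < q → 0 < v q := fun q hq => hq.trans_le hv.le_apply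
  refine ⟨update T 0 (F 0), fun i => ?_, update_self .., fun q hq => ?_, fun i hi hiv => ?_⟩
  · rcases i.eq_zero_or_pos with rfl | hi
    · simp
    · simpa [update_of_ne hi.ne'] using hTF i hi
  · rw [update_of_ne (hv0 q hq).ne', hTcard _ (hv0 q hq), if_pos (mem_range_self q),
      leftInverse_invFun hv.injective q]
  · rw [update_of_ne hi.ne', hTcard i hi, if_neg hiv]

section Embedding

/-! Source coordinate `i` goes to target coordinate `P i`, where the value `a` becomes
`e (P i) a`; a target coordinate outside `range P` is frozen at `s j`. -/

variable (P N : ℕ → ℕ) (e : ℕ → ℕ → ℕ) (s : ℕ → ℕ)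

open Classical in
noncomputable def embedPoint (t : ℕ) (y : ℕ → ℕ) : ℕ → ℕ := fun j =>
  if P 0 < j ∧ j ≤ N t then (if j ∈ range P then e j (y (invFun P j)) else s j) else 0

noncomputable def pullbackColoring (c : ℕ → Finset ℕ → (ℕ → ℕ) → Bool) :
    ℕ → Finset ℕ → (ℕ → ℕ) → Bool :=
  fun t B y => c (N t) (B.image (e (P 0))) (embedPoint P N e s t y)

open Classical in
noncomputable def embedBox (F : ℕ → Finset ℕ) : ℕ → Finset ℕ := fun j =>
  if j ∈ range P then (F (invFun P j)).image (e j) else {s j}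

noncomputable def decodePoint (F : ℕ → Finset ℕ) (t : ℕ) (x : ℕ → ℕ) : ℕ → ℕ := fun i =>
  if 0 < i ∧ i ≤ t then invFunOn (e (P i)) (F i) (x (P i)) else 0

variable {P N e s} {F : ℕ → Finset ℕ}

theorem embedBox_apply_self (hP : Injective P) (i : ℕ) :
    embedBox P e s F (P i) = (F i).image (e (P i)) := by
  simp [embedBox, leftInverse_invFun hP i]

theorem embedBox_of_notMem {j : ℕ} (hj : j ∉ range P) : embedBox P e s F j = {s j} := by
  simp [embedBox, hj]

theorem card_embedBox_apply_self (hP : Injective P) {i : ℕ} (hinj : InjOn (e (P i)) (F i)) :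
    (embedBox P e s F (P i)).card = (F i).card := by
  rw [embedBox_apply_self hP, Finset.card_image_of_injOn hinj]

theorem embedBox_subset {K : ℕ → Finset ℕ} (hP : Injective P)
    (hmaps : ∀ i, MapsTo (e (P i)) (F i) (K (P i))) (hs : ∀ j, P 0 ≤ j → s j ∈ K j) {j : ℕ}
    (hj : P 0 ≤ j) : embedBox P e s F j ⊆ K j := by
  by_cases hjP : j ∈ range P
  · obtain ⟨i, rfl⟩ := hjP
    rw [embedBox_apply_self hP]
    exact Finset.image_subset_iff.2 fun a ha => hmaps i ha
  · simpa [embedBox_of_notMem hjP] using hs j hj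

theorem card_embedBox_eq_one {v : ℕ → ℕ} (hP : StrictMono P) (hinj : ∀ i, InjOn (e (P i)) (F i))
    (hF : ∀ i, 0 < i → i ∉ range v → (F i).card = 1) {j : ℕ} (hj : P 0 < j)
    (hjv : j ∉ range (P ∘ v)) : (embedBox P e s F j).card = 1 := by
  by_cases hjP : j ∈ range P
  · obtain ⟨i, rfl⟩ := hjP
    rw [card_embedBox_apply_self hP.injective (hinj i)]
    exact hF i (hP.lt_iff_lt.1 hj) fun ⟨q, hq⟩ => hjv ⟨q, by simp [hq]⟩
  · rw [embedBox_of_notMem hjP, Finset.card_singleton]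

theorem decodePoint_mem (hPN : Interleaved P N) {t i : ℕ} {x : ℕ → ℕ}
    (hx : ∀ j, P 0 < j → j ≤ N t → x j ∈ embedBox P e s F j) (hi : 0 < i) (hit : i ≤ t) :
    decodePoint P e F t x i ∈ F i ∧ e (P i) (decodePoint P e F t x i) = x (P i) := by
  have hP := hPN.strictMono_left
  have hxi := hx _ (hP hi) (hPN.le_iff.2 hit)
  rw [embedBox_apply_self hP.injective, Finset.mem_image] at hxi
  rw [decodePoint, if_pos ⟨hi, hit⟩]
  exact ⟨invFunOn_mem (by simpa using hxi), invFunOn_eq (by simpa using hxi)⟩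

theorem embedPoint_decodePoint (hPN : Interleaved P N) {t : ℕ} {x : ℕ → ℕ}
    (hx : ∀ j, P 0 < j → j ≤ N t → x j ∈ embedBox P e s F j)
    (hx0 : ∀ j, j ≤ P 0 ∨ N t < j → x j = 0) :
    embedPoint P N e s t (decodePoint P e F t x) = x := by
  have hP := hPN.strictMono_left
  funext j
  by_cases hj : P 0 < j ∧ j ≤ N t
  · by_cases hjP : j ∈ range P
    · obtain ⟨i, rfl⟩ := hjP
      rw [embedPoint, if_pos hj, if_pos (mem_range_self i), leftInverse_invFun hP.injective i]
      exact (decodePoint_mem hPN hx (hP.lt_iff_lt.1 hj.1) (hPN.le_iff.1 hj.2)).2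
    · have hxj := hx j hj.1 hj.2
      rw [embedBox_of_notMem hjP, Finset.mem_singleton] at hxj
      rw [embedPoint, if_pos hj, if_neg hjP, hxj]
  · rw [embedPoint, if_neg hj]
    exact (hx0 j (by omega)).symm

theorem Monochromatic.of_pullbackColoring {c : ℕ → Finset ℕ → (ℕ → ℕ) → Bool} {k t : ℕ}
    {ε : Bool} (hPN : Interleaved P N) (hinj : ∀ i, InjOn (e (P i)) (F i))
    (h : Monochromatic (pullbackColoring P N e s c) k 0 F t ε) :
    Monochromatic c k (P 0) (embedBox P e s F) (N t) ε := by
  intro A hA hAk x hx hx0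
  rw [embedBox_apply_self hPN.strictMono_left.injective] at hA
  obtain ⟨B, hBF, rfl⟩ := Finset.subset_image_iff.1 hA
  have hBk : B.card = k := by
    rwa [Finset.card_image_of_injOn ((hinj 0).mono (Finset.coe_subset.2 hBF))] at hAk
  have hy0 : ∀ i, i ≤ 0 ∨ t < i → decodePoint P e F t x i = 0 := fun i hi => by
    rw [decodePoint, if_neg (by omega)]
  have := h B hBF hBk _ (fun i hi hit => (decodePoint_mem hPN hx hi hit).1) hy0
  rwa [pullbackColoring, embedPoint_decodePoint hPN hx hx0] at this

end Embedding

end ProductTree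

open ProductTree

theorem stmt7_general (k : ℕ) (R : List ℕ → ℕ)
    (hR : ∀ m : ℕ → ℕ, (∀ j, 1 ≤ m j) →
      ∀ c : ℕ → Finset ℕ → (ℕ → ℕ) → Bool,
        ∃ H : ℕ → Finset ℕ,
          (∀ j, H j ⊆ Finset.range (R ((List.range (j + 1)).map m))) ∧
          (∀ j, (H j).card = m j) ∧
          {n : ℕ | ∃ ε : Bool, ∀ A : Finset ℕ, A ⊆ H 0 → A.card = k →
              ∀ x : ℕ → ℕ, (∀ j, 1 ≤ j → j ≤ n → x j ∈ H j) →
                x 0 = 0 → (∀ j, n < j → x j = 0) →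
                c n A x = ε}.Infinite)
    (l n : ℕ → ℕ) (hln : ∀ i, l i ≤ n i) (hnl : ∀ i, n i < l (i + 1))
    (m0 : ℕ) (hm0 : 1 ≤ m0)
    (K : ℕ → Finset ℕ) (hKne : ∀ j, l 0 ≤ j → (K j).Nonempty)
    (hK0 : (K (l 0)).card = R [m0])
    (hKl : ∀ i, 1 ≤ i → i ≤ (K (l i)).card)
    (c : ℕ → Finset ℕ → (ℕ → ℕ) → Bool) (r : ℕ) :
    ∃ l' n' : ℕ → ℕ, StrictMono l' ∧ StrictMono n' ∧
      Set.range l' ⊆ Set.range l ∧ Set.range n' ⊆ Set.range n ∧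
      l' 0 = l 0 ∧ (∀ i, l' i ≤ n' i) ∧ (∀ i, n' i < l' (i + 1)) ∧
      ∃ H : ℕ → Finset ℕ, (∀ j, l 0 ≤ j → H j ⊆ K j) ∧
        (H (l 0)).card = m0 ∧
        (∀ i, 1 ≤ i → (H (l' i)).card = r + i) ∧
        (∀ j, l 0 < j → j ∉ Set.range l' → (H j).card = 1) ∧
        ∃ ε : Bool, ∀ p, ∀ A : Finset ℕ, A ⊆ H (l 0) → A.card = k →
          ∀ x : ℕ → ℕ, (∀ j, l 0 < j → j ≤ n' p → x j ∈ H j) →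
            (∀ j, j ≤ l 0 ∨ n' p < j → x j = 0) →
            c (n' p) A x = ε := by
  classical
  set m : ℕ → ℕ := fun i => if i = 0 then m0 else r + i with hm
  obtain ⟨g, e, hg, hg0, he⟩ := exists_strictMono_injOn_mapsTo K l hKl
    (fun i => R ((List.range (i + 1)).map m)) (by simp [hm, hK0])
  have hP : Interleaved (l ∘ g) (n ∘ g) :=
    Interleaved.comp (fun i => ⟨hln i, hnl i⟩) (.of_strictMono hg)
  have hP0 : (l ∘ g) 0 = l 0 := by simp [hg0]
  choose! s hs using hKne
  obtain ⟨F, hFR, hFcard, hFinf⟩ := hR m (fun j => by simp only [hm]; split_ifs <;> omega)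
    (pullbackColoring (l ∘ g) (n ∘ g) e s c)
  simp only [← monochromatic_zero_iff] at hFinf
  obtain ⟨ε, hε⟩ := exists_infinite_setOf_of_infinite_setOf_exists hFinf
  set σ := Nat.nth fun t => Monochromatic (pullbackColoring (l ∘ g) (n ∘ g) e s c) k 0 F t ε
  have hv := interleaved_shiftSucc (Nat.nth_strictMono hε)
  obtain ⟨F', hF'F, hF'0, hF'v, hF'1⟩ := exists_thinning F r
    (fun i hi => by simp [hFcard, hm, hi.ne']) hv.strictMono_left
  have hF'R i : (F' i : Set ℕ) ⊆ Finset.range _ := Finset.coe_subset.2 ((hF'F i).trans (hFR i))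
  have hinj i : InjOn (e (l (g i))) (F' i) := (he i).1.mono (hF'R i)
  have hL := hP.comp hv
  refine ⟨l ∘ g ∘ shiftSucc σ, n ∘ g ∘ σ, hL.strictMono_left, hL.strictMono_right,
    range_comp_subset_range _ _, range_comp_subset_range _ _, by simp [shiftSucc, hg0],
    fun p => (hL p).1, fun p => (hL p).2, embedBox (l ∘ g) e s F', fun j hj => ?_, ?_,
    fun q hq => ?_, fun j hj hjv => ?_, ε, fun p => ?_⟩
  · exact embedBox_subset hP.strictMono_left.injective (fun i => (he i).2.mono_left (hF'R i))
      (hP0 ▸ hs) (hP0.symm ▸ hj)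
  · rw [← hP0, card_embedBox_apply_self hP.strictMono_left.injective (hinj 0), hF'0, hFcard]
    simp [hm]
  · exact (card_embedBox_apply_self hP.strictMono_left.injective (hinj _)).trans (hF'v q hq)
  · exact card_embedBox_eq_one hP.strictMono_left hinj hF'1 (hP0.symm ▸ hj) hjv
  · have := ((Nat.nth_mem_of_infinite hε p).anti hF'F).of_pullbackColoring hP hinj
    rwa [hP0] at this

theorem stmt7 (k : ℕ) (hk : 1 ≤ k) (R : List ℕ → ℕ)
    (hR : ∀ m : ℕ → ℕ, (∀ j, 1 ≤ m j) →
      ∀ c : ℕ → Finset ℕ → (ℕ → ℕ) → Bool,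
        ∃ H : ℕ → Finset ℕ,
          (∀ j, H j ⊆ Finset.range (R ((List.range (j + 1)).map m))) ∧
          (∀ j, (H j).card = m j) ∧
          {n : ℕ | ∃ ε : Bool, ∀ A : Finset ℕ, A ⊆ H 0 → A.card = k →
              ∀ x : ℕ → ℕ, (∀ j, 1 ≤ j → j ≤ n → x j ∈ H j) →
                x 0 = 0 → (∀ j, n < j → x j = 0) →
                c n A x = ε}.Infinite)
    (l n : ℕ → ℕ) (hl : StrictMono l) (hn : StrictMono n)
    (hln : ∀ i, l i ≤ n i) (hnl : ∀ i, n i < l (i + 1))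
    (m0 : ℕ) (hm0 : 1 ≤ m0)
    (K : ℕ → Finset ℕ) (hKne : ∀ j, l 0 ≤ j → (K j).Nonempty)
    (hK0 : (K (l 0)).card = R [m0])
    (hKl : ∀ i, 1 ≤ i → i ≤ (K (l i)).card)
    (hK1 : ∀ j, l 0 < j → j ∉ Set.range l → (K j).card = 1)
    (c : ℕ → Finset ℕ → (ℕ → ℕ) → Bool) (r : ℕ) :
    ∃ l' n' : ℕ → ℕ, StrictMono l' ∧ StrictMono n' ∧
      Set.range l' ⊆ Set.range l ∧ Set.range n' ⊆ Set.range n ∧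
      l' 0 = l 0 ∧ (∀ i, l' i ≤ n' i) ∧ (∀ i, n' i < l' (i + 1)) ∧
      ∃ H : ℕ → Finset ℕ, (∀ j, l 0 ≤ j → H j ⊆ K j) ∧
        (H (l 0)).card = m0 ∧
        (∀ i, 1 ≤ i → (H (l' i)).card = r + i) ∧
        (∀ j, l 0 < j → j ∉ Set.range l' → (H j).card = 1) ∧
        ∃ ε : Bool, ∀ p, ∀ A : Finset ℕ, A ⊆ H (l 0) → A.card = k →
          ∀ x : ℕ → ℕ, (∀ j, l 0 < j → j ≤ n' p → x j ∈ H j) →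
            (∀ j, j ≤ l 0 ∨ n' p < j → x j = 0) →
            c (n' p) A x = ε :=
  stmt7_general k R hR l n hln hnl m0 hm0 K hKne hK0 hKl c r
end

section
/- (Roslanowski–Shelah, recovered) Let t̄ ∈ PC^tt_∞(K_1, Σ_1^*), and for each k < ω let l_k ≥ 1 and d_k : pos^tt(t̄⟨k⟩) → l_k be given. Then there is an s̄ ≤ t̄ in PC^tt_∞(K_1, Σ_1^*) such that m^{s_0}_dn = m^{t_0}_dn and for each i < ω, if k is such that s_i ∈ Σ^tt(t̄⟨k⟩), then d_k restricted to pos^tt(s̄⟨i⟩) is constant. -/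
open Filter

/- Example 2.10 of Roslanowski–Shelah.  H_1(n) = n+1.  An element of K_1 is an FP
creature t = (nor[t], val[t], dis[t], m^t_dn, m^t_up) with dis[t] = (u^t, i^t, A^t),
u^t ⊆ [m^t_dn, m^t_up), i^t ∈ u^t, ∅ ≠ A^t ⊆ H_1(i^t), nor[t] = log₂|A^t|, and
val[t] ⊆ ∏_{j∈u^t} H_1(j) a nonempty (finite) set with {f(i^t) : f ∈ val[t]} = A^t.
Partial finitary functions are modelled as f : ℕ → Option ℕ, where the domain is
{j | (f j).isSome}. -/
structure Creature1 where
  mdn : ℕ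
  mup : ℕ
  hm : mdn < mup
  u : Finset ℕ
  hu : u ⊆ Finset.Ico mdn mup
  idx : ℕ
  hidx : idx ∈ u
  A : Finset ℕ
  hA : A.Nonempty
  hAH : ∀ a ∈ A, a < idx + 1
  val : Finset (ℕ → Option ℕ)
  hvalne : val.Nonempty
  hdom : ∀ f ∈ val, ∀ j, (f j).isSome ↔ j ∈ u
  hran : ∀ f ∈ val, ∀ j a, f j = some a → a < j + 1
  hproj : ∀ a, a ∈ A ↔ ∃ f ∈ val, f idx = some a
  nor : ℝ
  hnor : nor = Real.logb 2 (A.card)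

/- Σ_1^*(t_a, …, t_b): creatures s with m^s_dn = m^{t_a}_dn, m^s_up = m^{t_b}_up,
u^s = ⋃_{a≤l≤b} u^{t_l}, i^s = i^{t_{l*}} and A^s ⊆ A^{t_{l*}} for some a ≤ l* ≤ b, and
val[s] ⊆ {f_a ∪ ⋯ ∪ f_b : f_l ∈ val[t_l]} (the union of partial functions with
pairwise disjoint domains u^{t_l}). -/
def Sigma1 (t : ℕ → Creature1) (a b : ℕ) : Set Creature1 :=
  {s | s.mdn = (t a).mdn ∧ s.mup = (t b).mup ∧
    s.u = (Finset.Icc a b).biUnion (fun l => (t l).u) ∧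
    (∃ l, a ≤ l ∧ l ≤ b ∧ s.idx = (t l).idx ∧ s.A ⊆ (t l).A) ∧
    (∀ f ∈ s.val, ∃ g : ℕ → (ℕ → Option ℕ),
      (∀ l, a ≤ l → l ≤ b → g l ∈ (t l).val) ∧
      (∀ l, a ≤ l → l ≤ b → ∀ j ∈ (t l).u, f j = g l j) ∧
      (∀ j, (∀ l, a ≤ l → l ≤ b → j ∉ (t l).u) → f j = none))}

/- Tight pure candidates: infinite sequences of creatures from K_1 with
m^{t_n}_up = m^{t_{n+1}}_dn and nor[t_n] → ∞. -/
def PCtt1 (t : ℕ → Creature1) : Prop :=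
  (∀ n, (t n).mup = (t (n + 1)).mdn) ∧
  Tendsto (fun n => (t n).nor) atTop atTop

/- t̄ ≤ s̄ iff there is a strictly increasing (j_n) with
t_n ∈ Σ_1^*(s_{j_n}, …, s_{j_{n+1}−1}) for all n. -/
def le1 (t s : ℕ → Creature1) : Prop :=
  ∃ j : ℕ → ℕ, StrictMono j ∧ ∀ n, t n ∈ Sigma1 s (j n) (j (n + 1) - 1)

/- Membership in the dense set R(PC^tt_∞(K_1, Σ_1^*)): |A^{t_l}| = l+1 and for each
a ∈ A^{t_l} there is exactly one g ∈ val[t_l] with g(i^{t_l}) = a. -/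
def R1cond (t : ℕ → Creature1) : Prop :=
  PCtt1 t ∧ ∀ l, (t l).A.card = l + 1 ∧
    ∀ a ∈ (t l).A, ∃! g, g ∈ (t l).val ∧ g (t l).idx = some a

/- r_k(t̄) = (t_0, …, t_{k−1}). -/
def restr1 (t : ℕ → Creature1) (k : ℕ) : List Creature1 :=
  List.ofFn (fun i : Fin k => t i.1)

/- Σ^tt(t̄) = ⋃_n Σ_1^*(t_0, …, t_n). -/
def Sigmatt1 (t : ℕ → Creature1) : Set Creature1 := ⋃ n, Sigma1 t 0 n

/- r_k[m, t̄] = {r_k(s̄) : s̄ ∈ [r_m(t̄), t̄]}, for t̄ in the space R(PC^tt_∞(K_1, Σ_1^*)). -/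
def rset1 (k m : ℕ) (t : ℕ → Creature1) : Set (List Creature1) :=
  {a | ∃ s : ℕ → Creature1, R1cond s ∧ le1 s t ∧
    restr1 s m = restr1 t m ∧ a = restr1 s k}

/- Σ^tt(t̄⟨k⟩) = ⋃_n Σ_1^*(t_k, …, t_{k+n}), where t̄⟨k⟩ is the tail (t_k, t_{k+1}, …). -/
def SigmattTail1 (t : ℕ → Creature1) (k : ℕ) : Set Creature1 :=
  ⋃ n, Sigma1 t k (k + n)

/- pos^tt(t̄⟨k⟩) = {f_0 ∪ ⋯ ∪ f_n : n < ω, f_i ∈ val[t_{k+i}]} (unions of partial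
functions with pairwise disjoint domains u^{t_{k+i}}). -/
def postt1 (t : ℕ → Creature1) (k : ℕ) : Set (ℕ → Option ℕ) :=
  {f | ∃ n, ∃ g : ℕ → (ℕ → Option ℕ),
    (∀ i, i ≤ n → g i ∈ (t (k + i)).val) ∧
    (∀ i, i ≤ n → ∀ j ∈ (t (k + i)).u, f j = g i j) ∧
    (∀ j, (∀ i, i ≤ n → j ∉ (t (k + i)).u) → f j = none)}


/-!
Call a set `B` of pairs `(e, f)` big from block `b` if for every `N` some
`σ ∈ Σ_1^*(t_b, …, t_e)` with `|A^σ| ≥ N` has `(e, f) ∈ B` for all `f ∈ val[σ]`. Splitting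
`val[σ]` in two splits `A^σ` in two, so the sets that are not big form an ideal, and since
`nor[t_n] → ∞` it is proper. Families `(U_b)_b` of ultrafilters on such pairs whose members are
all big form a compact semigroup under `(U·V)_b = lim_{x → U_b} x ∪ V_{x.1 + 1}`, so by
Ellis–Numakura there is an idempotent `U = U·U`. Then `s̄` is built as in Glazer's proof of
Hindman's theorem: a claim "`d_k(p ∪ ·) = ε` on a `U_b`-large set" stays alive along `U_b`-almost
every extension of `p` by idempotence, so each `s_m` can be taken big with all its values inside
the finitely many large sets that keep the current claims true and alive.
-/

def punion {α β : Type*} (f g : α → Option β) : α → Option β := fun j => (f j).or (g j)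

section punion

variable {α β : Type*} {f g : α → Option β} {j : α}

lemma punion_assoc (f g h : α → Option β) : punion (punion f g) h = punion f (punion g h) :=
  funext fun _ => Option.or_assoc

lemma punion_apply_of_isSome (h : (f j).isSome) : punion f g j = f j := Option.or_of_isSome h

lemma punion_apply_of_eq_none (h : f j = none) : punion f g j = g j := by
  simp [punion, h]

end punion

lemma Ultrafilter.continuous_bind {α β : Type*} (k : α → Ultrafilter β) :
    Continuous fun W : Ultrafilter α => W.bind k := by
  refine ultrafilterBasis_is_basis.continuous_iff.2 <| Set.forall_mem_range.2 fun s => ?_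
  exact ultrafilter_isOpen_basic {x | s ∈ k x}

lemma Ultrafilter.exists_preimage_singleton_mem {α : Type*} (W : Ultrafilter α) {φ : α → ℕ}
    {n : ℕ} (hφ : ∀ x, φ x < n) : ∃ ε, φ ⁻¹' {ε} ∈ W := by
  have hcover : (⋃ ε ∈ Set.Iio n, φ ⁻¹' {ε}) ∈ W :=
    Filter.mem_of_superset Filter.univ_mem fun x _ => Set.mem_biUnion (hφ x) rfl
  obtain ⟨ε, -, hε⟩ := (Ultrafilter.finite_biUnion_mem_iff (Set.finite_Iio n)).1 hcover
  exact ⟨ε, hε⟩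

lemma exists_seq_of_forall_exists {α : Type*} {P : α → Prop} {R : α → α → Prop} {a : α}
    (ha : P a) (h : ∀ x, P x → ∃ y, R x y ∧ P y) :
    ∃ f : ℕ → α, f 0 = a ∧ ∀ n, P (f n) ∧ R (f n) (f (n + 1)) := by
  choose g hg using h
  let F : ℕ → {x // P x} := fun n => Nat.rec ⟨a, ha⟩ (fun _ x => ⟨g x.1 x.2, (hg x.1 x.2).2⟩) n
  exact ⟨fun n => (F n).1, rfl, fun n => ⟨(F n).2, (hg _ (F n).2).1⟩⟩

namespace Creature1

variable {σ σ₁ σ₂ : Creature1} {t : ℕ → Creature1} {f f₁ f₂ : ℕ → Option ℕ} {a b c j : ℕ}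

lemma mem_u_bounds (hj : j ∈ σ.u) : σ.mdn ≤ j ∧ j < σ.mup := Finset.mem_Ico.1 (σ.hu hj)

lemma isSome_of_mem_val (hf : f ∈ σ.val) (hj : j ∈ σ.u) : (f j).isSome := (σ.hdom f hf j).2 hj

lemma eq_none_of_mem_val (hf : f ∈ σ.val) (hj : j ∉ σ.u) : f j = none :=
  Option.not_isSome_iff_eq_none.1 (mt (σ.hdom f hf j).1 hj)

def IsConsecutive (t : ℕ → Creature1) : Prop := ∀ n, (t n).mup = (t (n + 1)).mdn

namespace IsConsecutive

lemma strictMono_mdn (hc : IsConsecutive t) : StrictMono fun n => (t n).mdn :=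
  strictMono_nat_of_lt_succ fun n => hc n ▸ (t n).hm

lemma mup_le_mdn (hc : IsConsecutive t) (h : a < b) : (t a).mup ≤ (t b).mdn :=
  hc a ▸ hc.strictMono_mdn.monotone h

lemma notMem_u (hc : IsConsecutive t) {l l' : ℕ} (hne : l ≠ l') (hj : j ∈ (t l).u) :
    j ∉ (t l').u := fun hj' => by
  have := mem_u_bounds hj
  have := mem_u_bounds hj'
  rcases hne.lt_or_gt with h | h
  · have := hc.mup_le_mdn h; omega
  · have := hc.mup_le_mdn h; omega

lemma le_of_mem_Sigma1 (hc : IsConsecutive t) (hσ : σ ∈ Sigma1 t a b) : a ≤ b := by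
  by_contra! h
  have := hc.mup_le_mdn h
  have := σ.hm
  rw [hσ.1, hσ.2.1] at this
  omega

lemma mup_eq_mdn (hc : IsConsecutive t) (h₁ : σ₁ ∈ Sigma1 t a b)
    (h₂ : σ₂ ∈ Sigma1 t (b + 1) c) : σ₁.mup = σ₂.mdn := by
  rw [h₁.2.1, h₂.1, hc b]

end IsConsecutive

/-- `f = f_a ∪ ⋯ ∪ f_b` with `f_l ∈ val[t_l]`, as in `Sigma1` and `postt1`. -/
def IsConcat (t : ℕ → Creature1) (a b : ℕ) (f : ℕ → Option ℕ) : Prop :=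
  ∃ g : ℕ → (ℕ → Option ℕ),
    (∀ l, a ≤ l → l ≤ b → g l ∈ (t l).val) ∧
    (∀ l, a ≤ l → l ≤ b → ∀ j ∈ (t l).u, f j = g l j) ∧
    (∀ j, (∀ l, a ≤ l → l ≤ b → j ∉ (t l).u) → f j = none)

lemma isConcat_self_iff : IsConcat t a a f ↔ f ∈ (t a).val := by
  constructor
  · rintro ⟨g, hg, hgu, hnone⟩
    convert hg a le_rfl le_rfl using 1
    funext j
    by_cases hj : j ∈ (t a).u
    · exact hgu a le_rfl le_rfl j hj
    · rw [hnone j fun l h₁ h₂ => by rwa [le_antisymm h₂ h₁],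
        eq_none_of_mem_val (hg a le_rfl le_rfl) hj]
  · intro hf
    refine ⟨fun _ => f, fun l h₁ h₂ => ?_, fun _ _ _ _ _ => rfl, fun j hj => ?_⟩
    · rwa [le_antisymm h₂ h₁]
    · exact eq_none_of_mem_val hf (hj a le_rfl le_rfl)

lemma IsConcat.isSome_iff (h : IsConcat t a b f) :
    (f j).isSome ↔ ∃ l, a ≤ l ∧ l ≤ b ∧ j ∈ (t l).u := by
  obtain ⟨g, hg, hgu, hnone⟩ := h
  constructor
  · intro hj
    by_contra! hout
    simp [hnone j hout] at hj
  · rintro ⟨l, h₁, h₂, hj⟩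
    rw [hgu l h₁ h₂ j hj]
    exact isSome_of_mem_val (hg l h₁ h₂) hj

lemma IsConcat.append (hc : IsConsecutive t) (hab : a ≤ b + 1) (hbc : b ≤ c)
    (h₁ : IsConcat t a b f₁) (h₂ : IsConcat t (b + 1) c f₂) : IsConcat t a c (punion f₁ f₂) := by
  obtain ⟨g₁, hg₁, hgu₁, hnone₁⟩ := id h₁
  obtain ⟨g₂, hg₂, hgu₂, hnone₂⟩ := h₂
  refine ⟨fun l => if l ≤ b then g₁ l else g₂ l, fun l hal hlc => ?_, fun l hal hlc j hj => ?_,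
    fun j hj => ?_⟩
  · dsimp only
    split_ifs with hlb
    · exact hg₁ l hal hlb
    · exact hg₂ l (by omega) hlc
  · dsimp only
    split_ifs with hlb
    · rw [punion_apply_of_isSome (h₁.isSome_iff.2 ⟨l, hal, hlb, hj⟩), hgu₁ l hal hlb j hj]
    · rw [punion_apply_of_eq_none (hnone₁ j fun l' _ hl'b => hc.notMem_u (by omega) hj)]
      exact hgu₂ l (by omega) hlc j hj
  · rw [punion_apply_of_eq_none (hnone₁ j fun l hal hlb => hj l hal (by omega))]
    exact hnone₂ j fun l hbl hlc => hj l (by omega) hlc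

lemma IsConcat.exists_eq_punion (hc : IsConsecutive t) (hab : a ≤ b + 1)
    (h : IsConcat t a (b + 1) f) :
    ∃ p, IsConcat t a b p ∧ ∃ g ∈ (t (b + 1)).val, f = punion p g := by
  classical
  obtain ⟨g, hg, hgu, hnone⟩ := h
  refine ⟨fun j => if j ∈ (t (b + 1)).u then none else f j,
    ⟨g, fun l hal hlb => hg l hal (by omega), fun l hal hlb j hj => ?_, fun j hj => ?_⟩,
    g (b + 1), hg (b + 1) hab le_rfl, funext fun j => ?_⟩
  · dsimp only
    rw [if_neg (hc.notMem_u (by omega) hj)]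
    exact hgu l hal (by omega) j hj
  · dsimp only
    split_ifs with hjb
    · rfl
    · exact hnone j fun l hal hlb => if hlb' : l ≤ b then hj l hal hlb' else by
        rwa [show l = b + 1 by omega]
  · by_cases hjb : j ∈ (t (b + 1)).u
    · simp [punion, hjb, hgu (b + 1) hab le_rfl j hjb]
    · simp [punion, hjb, eq_none_of_mem_val (hg (b + 1) hab le_rfl) hjb]

def proj (σ : Creature1) (f : ℕ → Option ℕ) : ℕ := (f σ.idx).getD 0

lemma apply_idx_eq_proj (hf : f ∈ σ.val) : f σ.idx = some (σ.proj f) := by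
  obtain ⟨x, hx⟩ := Option.isSome_iff_exists.1 (isSome_of_mem_val hf σ.hidx)
  simp [proj, hx]

lemma A_eq_image_proj (σ : Creature1) : σ.A = σ.val.image σ.proj := by
  ext x
  simp only [σ.hproj, Finset.mem_image]
  exact exists_congr fun f => and_congr_right fun hf => by
    rw [apply_idx_eq_proj hf, Option.some_inj, eq_comm]

noncomputable def restrict (σ : Creature1) (W : Finset (ℕ → Option ℕ)) (hW : W ⊆ σ.val)
    (hne : W.Nonempty) : Creature1 :=
  { σ with
    A := W.image σ.proj
    hA := hne.image _
    hAH := fun x hx => σ.hAH x (σ.A_eq_image_proj ▸ Finset.image_subset_image hW hx)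
    val := W
    hvalne := hne
    hdom := fun f hf => σ.hdom f (hW hf)
    hran := fun f hf => σ.hran f (hW hf)
    hproj := fun x => by
      simp only [Finset.mem_image]
      exact exists_congr fun f => and_congr_right fun hf => by
        rw [apply_idx_eq_proj (hW hf), Option.some_inj]
    nor := Real.logb 2 (W.image σ.proj).card
    hnor := rfl }

lemma restrict_mem_Sigma1 {W : Finset (ℕ → Option ℕ)} (hW : W ⊆ σ.val) (hne : W.Nonempty)
    (hσ : σ ∈ Sigma1 t a b) : σ.restrict W hW hne ∈ Sigma1 t a b := by
  obtain ⟨hdn, hup, hu, ⟨l, hal, hlb, hidx, hA⟩, hval⟩ := hσ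
  refine ⟨hdn, hup, hu, ⟨l, hal, hlb, hidx, subset_trans ?_ hA⟩, fun f hf => hval f (hW hf)⟩
  exact σ.A_eq_image_proj ▸ Finset.image_subset_image hW

lemma idx_notMem_u_of_mup_eq (h : σ₁.mup = σ₂.mdn) : σ₂.idx ∉ σ₁.u := fun hidx => by
  have := mem_u_bounds hidx
  have := mem_u_bounds σ₂.hidx
  omega

open Classical in
noncomputable def append (σ₁ σ₂ : Creature1) (h : σ₁.mup = σ₂.mdn) : Creature1 where
  mdn := σ₁.mdn
  mup := σ₂.mup
  hm := σ₁.hm.trans (h ▸ σ₂.hm)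
  u := σ₁.u ∪ σ₂.u
  hu := by
    intro j hj
    have := σ₁.hm
    have := σ₂.hm
    rw [Finset.mem_Ico]
    rcases Finset.mem_union.1 hj with hj | hj
    · have := mem_u_bounds hj; omega
    · have := mem_u_bounds hj; omega
  idx := σ₂.idx
  hidx := Finset.mem_union_right _ σ₂.hidx
  A := σ₂.A
  hA := σ₂.hA
  hAH := σ₂.hAH
  val := Finset.image₂ punion σ₁.val σ₂.val
  hvalne := σ₁.hvalne.image₂ σ₂.hvalne
  hdom := by
    simp only [Finset.mem_image₂]
    rintro _ ⟨f₁, hf₁, f₂, hf₂, rfl⟩ j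
    simp [punion, σ₁.hdom f₁ hf₁, σ₂.hdom f₂ hf₂]
  hran := by
    simp only [Finset.mem_image₂]
    rintro _ ⟨f₁, hf₁, f₂, hf₂, rfl⟩ j x hx
    rcases Option.or_eq_some_iff.1 hx with hx | ⟨-, hx⟩
    · exact σ₁.hran f₁ hf₁ j x hx
    · exact σ₂.hran f₂ hf₂ j x hx
  hproj := fun x => by
    have hnone : ∀ f₁ ∈ σ₁.val, f₁ σ₂.idx = none :=
      fun f₁ hf₁ => eq_none_of_mem_val hf₁ (idx_notMem_u_of_mup_eq h)
    simp only [Finset.mem_image₂, σ₂.hproj]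
    constructor
    · rintro ⟨f₂, hf₂, hx⟩
      obtain ⟨f₁, hf₁⟩ := σ₁.hvalne
      exact ⟨_, ⟨f₁, hf₁, f₂, hf₂, rfl⟩, by rwa [punion_apply_of_eq_none (hnone f₁ hf₁)]⟩
    · rintro ⟨_, ⟨f₁, hf₁, f₂, hf₂, rfl⟩, hx⟩
      exact ⟨f₂, hf₂, by rwa [punion_apply_of_eq_none (hnone f₁ hf₁)] at hx⟩
  nor := σ₂.nor
  hnor := σ₂.hnor

open Classical in
lemma mem_append_val {h : σ₁.mup = σ₂.mdn} :
    f ∈ (σ₁.append σ₂ h).val ↔ ∃ f₁ ∈ σ₁.val, ∃ f₂ ∈ σ₂.val, punion f₁ f₂ = f :=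
  Finset.mem_image₂

lemma self_mem_Sigma1 (t : ℕ → Creature1) (n : ℕ) : t n ∈ Sigma1 t n n :=
  ⟨rfl, rfl, by simp, ⟨n, le_rfl, le_rfl, rfl, subset_rfl⟩,
    fun _ hf => isConcat_self_iff.2 hf⟩

lemma IsConsecutive.append_mem_Sigma1 (hc : IsConsecutive t) (h₁ : σ₁ ∈ Sigma1 t a b)
    (h₂ : σ₂ ∈ Sigma1 t (b + 1) c) (h : σ₁.mup = σ₂.mdn) : σ₁.append σ₂ h ∈ Sigma1 t a c := by
  have hab := hc.le_of_mem_Sigma1 h₁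
  have hbc := hc.le_of_mem_Sigma1 h₂
  obtain ⟨hdn₁, -, hu₁, -, hval₁⟩ := h₁
  obtain ⟨-, hup₂, hu₂, ⟨l, hbl, hlc, hidx, hA⟩, hval₂⟩ := h₂
  have hIcc : Finset.Icc a c = Finset.Icc a b ∪ Finset.Icc (b + 1) c := by
    ext l; simp only [Finset.mem_union, Finset.mem_Icc]; omega
  refine ⟨hdn₁, hup₂, ?_, ⟨l, by omega, hlc, hidx, hA⟩, fun f hf => ?_⟩
  · change σ₁.u ∪ σ₂.u = _
    rw [hu₁, hu₂, hIcc, Finset.union_biUnion]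
  · obtain ⟨f₁, hf₁, f₂, hf₂, rfl⟩ := mem_append_val.1 hf
    exact IsConcat.append hc (by omega) (by omega) (hval₁ f₁ hf₁) (hval₂ f₂ hf₂)

lemma IsConsecutive.exists_mem_Sigma1_A_eq (hc : IsConsecutive t) (hbn : b ≤ c) :
    ∃ σ ∈ Sigma1 t b c, σ.A = (t c).A := by
  induction c, hbn using Nat.le_induction with
  | base => exact ⟨t b, self_mem_Sigma1 t b, rfl⟩
  | succ c _ ih =>
    obtain ⟨σ, hσ, -⟩ := ih
    have h := hc.mup_eq_mdn hσ (self_mem_Sigma1 t (c + 1))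
    exact ⟨σ.append (t (c + 1)) h, hc.append_mem_Sigma1 hσ (self_mem_Sigma1 t (c + 1)) h, rfl⟩

lemma tendsto_nor_iff :
    Tendsto (fun n => (t n).nor) atTop atTop ↔ Tendsto (fun n => (t n).A.card) atTop atTop := by
  have hcard : ∀ n, ((t n).A.card : ℝ) = 2 ^ (t n).nor := fun n => by
    rw [(t n).hnor, Real.rpow_logb two_pos (by norm_num) (by exact_mod_cast (t n).hA.card_pos)]
  rw [← tendsto_natCast_atTop_iff (R := ℝ)]
  constructor
  · intro h
    simp only [hcard]
    exact (tendsto_rpow_atTop_of_base_gt_one 2 one_lt_two).comp h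
  · intro h
    simp only [(t _).hnor]
    exact (Real.tendsto_logb_atTop one_lt_two).comp h


/-- A point `(e, f)` stands for a value `f` of a creature ending at the block `t_e`. -/
abbrev Point := ℕ × (ℕ → Option ℕ)

def IsBig (t : ℕ → Creature1) (b : ℕ) (S : Set Point) : Prop :=
  ∀ N, ∃ e, ∃ σ ∈ Sigma1 t b e, N ≤ σ.A.card ∧ ∀ f ∈ σ.val, (e, f) ∈ S

lemma IsBig.mono {S T : Set Point} (h : IsBig t b S) (hST : S ⊆ T) : IsBig t b T := fun N =>
  let ⟨e, σ, hσ, hN, hS⟩ := h N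
  ⟨e, σ, hσ, hN, fun f hf => hST (hS f hf)⟩

lemma IsConsecutive.isBig_univ (hc : IsConsecutive t)
    (hcard : Tendsto (fun n => (t n).A.card) atTop atTop) (b : ℕ) : IsBig t b Set.univ := by
  intro N
  obtain ⟨n, hN, hbn⟩ := ((hcard.eventually_ge_atTop N).and (eventually_ge_atTop b)).exists
  obtain ⟨σ, hσ, hA⟩ := hc.exists_mem_Sigma1_A_eq hbn
  exact ⟨n, σ, hσ, hA ▸ hN, fun _ _ => trivial⟩

lemma not_isBig_empty : ¬ IsBig t b ∅ := fun h =>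
  let ⟨_, σ, _, _, hS⟩ := h 0
  let ⟨f, hf⟩ := σ.hvalne
  hS f hf

lemma exists_notMem_of_not_isBig {S : Set Point} (h : ¬ IsBig t b S) :
    ∃ N, ∀ e, ∀ σ ∈ Sigma1 t b e, ∀ W ⊆ σ.val, N ≤ (W.image σ.proj).card →
      ∃ f ∈ W, (e, f) ∉ S := by
  simp only [IsBig, not_forall, not_exists, not_and] at h
  obtain ⟨N, hN⟩ := h
  refine ⟨N + 1, fun e σ hσ W hW hcard => ?_⟩
  have hne : W.Nonempty :=
    Finset.image_nonempty.1 (Finset.card_pos.1 (by omega : 0 < (W.image σ.proj).card))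
  obtain ⟨f, hf, hfS⟩ := hN e (σ.restrict W hW hne) (restrict_mem_Sigma1 hW hne hσ)
    (show N ≤ (W.image σ.proj).card by omega)
  exact ⟨f, hf, hfS⟩

lemma not_isBig_union {S T : Set Point} (hS : ¬ IsBig t b S) (hT : ¬ IsBig t b T) :
    ¬ IsBig t b (S ∪ T) := by
  classical
  obtain ⟨N₁, hN₁⟩ := exists_notMem_of_not_isBig hS
  obtain ⟨N₂, hN₂⟩ := exists_notMem_of_not_isBig hT
  intro hST
  obtain ⟨e, σ, hσ, hcard, hval⟩ := hST (N₁ + N₂)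
  set W₁ := σ.val.filter fun f => (e, f) ∈ S
  set W₂ := σ.val.filter fun f => (e, f) ∉ S
  have hsplit : σ.A.card ≤ (W₁.image σ.proj).card + (W₂.image σ.proj).card := by
    rw [A_eq_image_proj, ← Finset.filter_union_filter_not_eq (fun f => (e, f) ∈ S) σ.val,
      Finset.image_union]
    exact Finset.card_union_le _ _
  by_cases h₁ : N₁ ≤ (W₁.image σ.proj).card
  · obtain ⟨f, hf, hfS⟩ := hN₁ e σ hσ W₁ (Finset.filter_subset _ _) h₁
    exact hfS (Finset.mem_filter.1 hf).2
  · obtain ⟨f, hf, hfT⟩ := hN₂ e σ hσ W₂ (Finset.filter_subset _ _) (by omega)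
    rw [Finset.mem_filter] at hf
    exact (hval f hf.1).elim hf.2 hfT

lemma IsConsecutive.exists_ultrafilter_isBig (hc : IsConsecutive t)
    (hcard : Tendsto (fun n => (t n).A.card) atTop atTop) (b : ℕ) :
    ∃ W : Ultrafilter Point, ∀ B ∈ W, IsBig t b B := by
  let F : Filter Point := .comk (¬ IsBig t b ·) not_isBig_empty
    (fun _ hS _ hTS hT => hS (hT.mono hTS)) (fun _ hS _ hT => not_isBig_union hS hT)
  have : F.NeBot := ⟨fun hF => by
    have : ∅ ∈ F := hF ▸ Filter.mem_bot
    simp only [F, Filter.mem_comk, Set.compl_empty] at this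
    exact this (hc.isBig_univ hcard b)⟩
  refine ⟨.of F, fun B hB => by_contra fun hnB => ?_⟩
  have : Bᶜ ∈ Ultrafilter.of F := Ultrafilter.of_le F (by simpa [F] using hnB)
  exact Ultrafilter.compl_mem_iff_notMem.1 this hB

noncomputable def blockMul (U V : ℕ → Ultrafilter Point) : ℕ → Ultrafilter Point :=
  fun b => (U b).bind fun x => (V (x.1 + 1)).map fun y => (y.1, punion x.2 y.2)

lemma mem_blockMul {U V : ℕ → Ultrafilter Point} {S : Set Point} :
    S ∈ blockMul U V b ↔ {x | {y | (y.1, punion x.2 y.2) ∈ S} ∈ V (x.1 + 1)} ∈ U b :=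
  Iff.rfl

lemma blockMul_assoc (U V W : ℕ → Ultrafilter Point) :
    blockMul (blockMul U V) W = blockMul U (blockMul V W) := by
  funext b
  ext S
  simp only [mem_blockMul, Set.mem_ofPred_eq, punion_assoc]

lemma continuous_blockMul_left (V : ℕ → Ultrafilter Point) :
    Continuous fun U => blockMul U V :=
  continuous_pi fun b => (Ultrafilter.continuous_bind _).comp (continuous_apply b)

def bigFamilies (t : ℕ → Creature1) : Set (ℕ → Ultrafilter Point) :=
  {U | ∀ b, ∀ B ∈ U b, IsBig t b B}

lemma isClosed_bigFamilies (t : ℕ → Creature1) : IsClosed (bigFamilies t) := by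
  simp only [bigFamilies, Set.ofPred_forall]
  refine isClosed_iInter fun b => isClosed_iInter fun B => ?_
  by_cases hB : IsBig t b B
  · simp [hB]
  · simp only [hB, imp_false, ← Ultrafilter.compl_mem_iff_notMem]
    exact (ultrafilter_isClosed_basic Bᶜ).preimage (continuous_apply (A := fun _ => _) b)

lemma blockMul_mem_bigFamilies (hc : IsConsecutive t) {U V : ℕ → Ultrafilter Point}
    (hU : U ∈ bigFamilies t) (hV : V ∈ bigFamilies t) : blockMul U V ∈ bigFamilies t := by
  intro b B hB N
  obtain ⟨e₁, σ₁, hσ₁, -, hval₁⟩ := hU b _ (mem_blockMul.1 hB) 0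
  have hB₂ : {y : Point | ∀ f ∈ σ₁.val, (y.1, punion f y.2) ∈ B} ∈ V (e₁ + 1) := by
    simpa only [Set.ofPred_forall, Ultrafilter.mem_coe] using
      (Filter.biInter_finset_mem (f := (V (e₁ + 1) : Filter Point)) σ₁.val).2 hval₁
  obtain ⟨e₂, σ₂, hσ₂, hN, hval₂⟩ := hV (e₁ + 1) _ hB₂ N
  have h := hc.mup_eq_mdn hσ₁ hσ₂
  refine ⟨e₂, σ₁.append σ₂ h, hc.append_mem_Sigma1 hσ₁ hσ₂ h, hN, fun f hf => ?_⟩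
  obtain ⟨f₁, hf₁, f₂, hf₂, rfl⟩ := mem_append_val.1 hf
  exact hval₂ f₂ hf₂ f₁ hf₁

lemma IsConsecutive.exists_idempotent_mem_bigFamilies (hc : IsConsecutive t)
    (hcard : Tendsto (fun n => (t n).A.card) atTop atTop) :
    ∃ U ∈ bigFamilies t, blockMul U U = U := by
  let : Semigroup (ℕ → Ultrafilter Point) := { mul := blockMul, mul_assoc := blockMul_assoc }
  choose W hW using hc.exists_ultrafilter_isBig hcard
  exact exists_idempotent_in_compact_subsemigroup continuous_blockMul_left (bigFamilies t)
    ⟨W, hW⟩ (isClosed_bigFamilies t).isCompact fun U hU V hV => blockMul_mem_bigFamilies hc hU hV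

variable {d : ℕ → (ℕ → Option ℕ) → ℕ} {l : ℕ → ℕ} {U : ℕ → Ultrafilter Point}

lemma IsConsecutive.of_mem_Sigma1 (hc : IsConsecutive t) {s : ℕ → Creature1} {b : ℕ → ℕ}
    (hb : StrictMono b) (hs : ∀ m, s m ∈ Sigma1 t (b m) (b (m + 1) - 1)) : IsConsecutive s :=
  fun m => hc.mup_eq_mdn (hs m) <| by
    have := hb (show m < m + 1 by omega)
    rw [Nat.sub_add_cancel (by omega)]
    exact hs (m + 1)

lemma exists_isConcat_of_mem_postt1 {s : ℕ → Creature1} {i : ℕ} {f : ℕ → Option ℕ}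
    (hf : f ∈ postt1 s i) : ∃ n, IsConcat s i (i + n) f := by
  obtain ⟨n, g, hg, hgu, hnone⟩ := hf
  refine ⟨n, fun l => g (l - i), fun l hil hln => ?_, fun l hil hln => ?_,
    fun j hj => hnone j fun m hm => hj (i + m) (by omega) (by omega)⟩
  · simpa only [Nat.add_sub_of_le hil] using hg (l - i) (by omega)
  · simpa only [Nat.add_sub_of_le hil] using hgu (l - i) (by omega)

/-- The requirement that the colouring `d coloring` take the value `color` on `head ∪ f` for
every `f` still to come. -/
structure Claim where
  coloring : ℕ
  head : ℕ → Option ℕ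
  color : ℕ

def Claim.extend (c : Claim) (f : ℕ → Option ℕ) : Claim := ⟨c.coloring, punion c.head f, c.color⟩

def Claim.Alive (d : ℕ → (ℕ → Option ℕ) → ℕ) (U : ℕ → Ultrafilter Point) (b : ℕ) (c : Claim) :
    Prop :=
  {x : Point | d c.coloring (punion c.head x.2) = c.color} ∈ U b

lemma Claim.Alive.eventually_extend (hidem : blockMul U U = U) {c : Claim} {b : ℕ}
    (h : c.Alive d U b) : {x : Point | (c.extend x.2).Alive d U (x.1 + 1)} ∈ U b := by
  rw [Claim.Alive, ← hidem, mem_blockMul] at h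
  simpa only [Claim.Alive, Claim.extend, Set.mem_ofPred_eq, punion_assoc] using h

/-- Stage `m` of the construction: `start = b_m`, the claims left by `s_0, …, s_{m-1}`, and the
choices `s_m = cr ∈ Σ_1^*(t_{b_m}, …, t_{last})` and `ε_m = color` made at this stage. -/
structure Stage where
  start : ℕ
  claims : Set Claim
  cr : Creature1
  last : ℕ
  color : ℕ

def Stage.pending (S : Stage) : Set Claim := insert ⟨S.start, fun _ => none, S.color⟩ S.claims

structure Stage.IsGood (t : ℕ → Creature1) (d : ℕ → (ℕ → Option ℕ) → ℕ)
    (U : ℕ → Ultrafilter Point) (S : Stage) : Prop where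
  finite : S.claims.Finite
  alive : ∀ c ∈ S.claims, c.Alive d U S.start
  mem_Sigma1 : S.cr ∈ Sigma1 t S.start S.last
  start_le_card : S.start ≤ S.cr.A.card
  pending_spec : ∀ c ∈ S.pending, ∀ f ∈ S.cr.val,
    d c.coloring (punion c.head f) = c.color ∧ (c.extend f).Alive d U (S.last + 1)

def Stage.Precedes (S T : Stage) : Prop :=
  T.start = S.last + 1 ∧ T.claims = Set.image2 Claim.extend S.pending S.cr.val

/-- The Glazer step: a big creature all of whose values lie in the finitely many `U b`-large sets
that keep the claims true and alive. -/
lemma exists_isGood (hU : U ∈ bigFamilies t) (hidem : blockMul U U = U)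
    (hd : ∀ k f, d k f < l k) {b : ℕ} {C : Set Claim} (hC : C.Finite)
    (halive : ∀ c ∈ C, c.Alive d U b) :
    ∃ S : Stage, S.start = b ∧ S.claims = C ∧ S.IsGood t d U := by
  obtain ⟨ε, hε⟩ :=
    (U b).exists_preimage_singleton_mem (φ := fun x => d b x.2) fun x => hd b x.2
  have halive' : ∀ c ∈ insert ⟨b, fun _ => none, ε⟩ C, c.Alive d U b := by
    rintro c (rfl | hc)
    · exact hε
    · exact halive c hc
  have hG : (⋂ c ∈ insert ⟨b, fun _ => none, ε⟩ C, {x : Point |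
      d c.coloring (punion c.head x.2) = c.color ∧ (c.extend x.2).Alive d U (x.1 + 1)}) ∈ U b :=
    (Filter.biInter_mem (f := (U b : Filter Point)) (hC.insert _)).2 fun c hc =>
      Filter.inter_mem (halive' c hc) ((halive' c hc).eventually_extend hidem)
  obtain ⟨e, σ, hσ, hcard, hval⟩ := hU b _ hG b
  exact ⟨⟨b, C, σ, e, ε⟩, rfl, rfl,
    ⟨hC, halive, hσ, hcard, fun c hc f hf => Set.mem_iInter₂.1 (hval f hf) c hc⟩⟩

lemma Stage.IsGood.exists_precedes {S : Stage} (hS : S.IsGood t d U) (hU : U ∈ bigFamilies t)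
    (hidem : blockMul U U = U) (hd : ∀ k f, d k f < l k) :
    ∃ T, S.Precedes T ∧ T.IsGood t d U := by
  obtain ⟨T, hstart, hclaims, hT⟩ := exists_isGood hU hidem hd
    ((hS.finite.insert _).image2 _ S.cr.val.finite_toSet)
    (by rintro _ ⟨c, hc, f, hf, rfl⟩; exact (hS.pending_spec c hc f hf).2)
  exact ⟨T, ⟨hstart, hclaims⟩, hT⟩

lemma Stage.IsGood.holds {S T : Stage} (hS : S.IsGood t d U) (hST : S.Precedes T) {c : Claim}
    (hc : c ∈ T.claims) : d c.coloring c.head = c.color := by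
  rw [hST.2] at hc
  obtain ⟨c, hc, f, hf, rfl⟩ := hc
  exact (hS.pending_spec c hc f hf).1

lemma Stage.mk_mem_claims_of_isConcat {S : ℕ → Stage} (hS : ∀ m, (S m).Precedes (S (m + 1)))
    (hcs : IsConsecutive fun m => (S m).cr) {i n : ℕ} {f : ℕ → Option ℕ}
    (hf : IsConcat (fun m => (S m).cr) i (i + n) f) :
    ⟨(S i).start, f, (S i).color⟩ ∈ (S (i + n + 1)).claims := by
  induction n generalizing f with
  | zero =>
    rw [(hS i).2]
    exact ⟨_, Set.mem_insert _ _, f, isConcat_self_iff.1 hf, rfl⟩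
  | succ n ih =>
    obtain ⟨p, hp, g, hg, rfl⟩ := IsConcat.exists_eq_punion (b := i + n) hcs (by omega) hf
    show _ ∈ (S (i + n + 1 + 1)).claims
    rw [(hS (i + n + 1)).2]
    exact ⟨_, Set.mem_insert_of_mem _ (ih hp), g, hg, rfl⟩

theorem IsConsecutive.exists_homogeneous_seq (hc : IsConsecutive t)
    (hcard : Tendsto (fun n => (t n).A.card) atTop atTop) (hd : ∀ k f, d k f < l k) :
    ∃ (s : ℕ → Creature1) (b ε : ℕ → ℕ), b 0 = 0 ∧ StrictMono b ∧
      (∀ m, s m ∈ Sigma1 t (b m) (b (m + 1) - 1)) ∧ (∀ m, b m ≤ (s m).A.card) ∧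
      ∀ i n f, IsConcat s i (i + n) f → d (b i) f = ε i := by
  obtain ⟨U, hU, hidem⟩ := hc.exists_idempotent_mem_bigFamilies hcard
  obtain ⟨S₀, hstart₀, -, hS₀⟩ := exists_isGood (b := 0) hU hidem hd Set.finite_empty
    fun _ h => h.elim
  obtain ⟨S, rfl, hS⟩ := exists_seq_of_forall_exists hS₀ fun _ h => h.exists_precedes hU hidem hd
  have hstart : ∀ m, (S (m + 1)).start - 1 = (S m).last := fun m => by
    rw [(hS m).2.1, Nat.add_sub_cancel]
  have hb : StrictMono fun m => (S m).start := strictMono_nat_of_lt_succ fun m => by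
    have := hc.le_of_mem_Sigma1 (hS m).1.mem_Sigma1
    rw [(hS m).2.1]
    omega
  have hs : ∀ m, (S m).cr ∈ Sigma1 t (S m).start ((S (m + 1)).start - 1) := fun m => by
    rw [hstart]
    exact (hS m).1.mem_Sigma1
  have hcs := hc.of_mem_Sigma1 hb hs
  exact ⟨fun m => (S m).cr, fun m => (S m).start, fun m => (S m).color, hstart₀, hb, hs,
    fun m => (hS m).1.start_le_card,
    fun i n f hf => (hS (i + n)).1.holds (hS (i + n)).2
      (Stage.mk_mem_claims_of_isConcat (fun m => (hS m).2) hcs hf)⟩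

end Creature1

theorem stmt11_general (t : ℕ → Creature1) (ht : PCtt1 t)
    (l : ℕ → ℕ)
    (d : ℕ → (ℕ → Option ℕ) → ℕ) (hd : ∀ k f, d k f < l k) :
    ∃ s : ℕ → Creature1, PCtt1 s ∧ le1 s t ∧ (s 0).mdn = (t 0).mdn ∧
      ∀ i k, s i ∈ SigmattTail1 t k →
        ∃ ε, ∀ f ∈ postt1 s i, d k f = ε := by
  obtain ⟨hc, hnor⟩ : Creature1.IsConsecutive t ∧ _ := ht
  obtain ⟨s, b, ε, hb0, hb, hs, hcard, hcolor⟩ :=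
    hc.exists_homogeneous_seq (Creature1.tendsto_nor_iff.1 hnor) hd
  have hnor_s : Tendsto (fun m => (s m).nor) atTop atTop :=
    Creature1.tendsto_nor_iff.2 <|
      tendsto_atTop_mono (fun m => (hb.id_le m).trans (hcard m)) tendsto_id
  refine ⟨s, ⟨hc.of_mem_Sigma1 hb hs, hnor_s⟩, ⟨b, hb, hs⟩, by rw [(hs 0).1, hb0],
    fun i k hk => ⟨ε i, fun f hf => ?_⟩⟩
  obtain ⟨n, hn⟩ := Set.mem_iUnion.1 hk
  obtain rfl : k = b i := hc.strictMono_mdn.injective (hn.1.symm.trans (hs i).1)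
  obtain ⟨n, hf⟩ := Creature1.exists_isConcat_of_mem_postt1 hf
  exact hcolor i n f hf

theorem stmt11 (t : ℕ → Creature1) (ht : PCtt1 t)
    (l : ℕ → ℕ) (hl : ∀ k, 1 ≤ l k)
    (d : ℕ → (ℕ → Option ℕ) → ℕ) (hd : ∀ k f, d k f < l k) :
    ∃ s : ℕ → Creature1, PCtt1 s ∧ le1 s t ∧ (s 0).mdn = (t 0).mdn ∧
      ∀ i k, s i ∈ SigmattTail1 t k →
        ∃ ε, ∀ f ∈ postt1 s i, d k f = ε :=
  stmt11_general t ht l d hd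
end

section
/- (Roslanowski–Shelah, recovered) Let t̄ ∈ PC^tt_∞(K_1, Σ_1^*), let l ≥ 1, and for each k < ω let d_k : pos^tt(t̄⟨k⟩) → l be given. Then there is an s̄ ≤ t̄ in PC^tt_∞(K_1, Σ_1^*) and an l′ < l such that for each i < ω, if k is such that s_i ∈ Σ^tt(t̄⟨k⟩) and f ∈ pos^tt(s̄⟨i⟩), then d_k(f) = l′. -/
open Filter

/-!
Words are the members `g_0 ∪ ⋯ ∪ g_b` of `pos^tt(t̄)`, multiplied by overlaying partial
functions (the left factor wins); this is a semigroup. Call a set of words large if, for all `a`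
and `k`, it realises every value of some creature on `t_m`, `m ≥ a`, with at least `k` values.
Largeness is partition regular and survives products of ultrafilters, so Ellis' lemma gives an
idempotent ultrafilter `U` whose members are all large. For each start `e` one colour class of
`d_e` is `U`-large, and one colour `v` is the `U`-majority at the end of `U`-almost every word.
As in Glazer's proof of Hindman's theorem, idempotence lets us choose the blocks of `s̄` one at
a time inside a `U`-large set that keeps every product of consecutive blocks in colour `v`.
-/

def seqProd {M : Type*} [Mul M] (c : ℕ → M) : ℕ → M
  | 0 => c 0
  | n + 1 => c 0 * seqProd (fun i => c (i + 1)) n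

def restrictFrom {α : Type*} (m : ℕ) (f : ℕ → Option α) : ℕ → Option α :=
  fun j => if m ≤ j then f j else none

lemma restrictFrom_apply {α : Type*} (m : ℕ) (f : ℕ → Option α) (j : ℕ) :
    restrictFrom m f j = if m ≤ j then f j else none := rfl

/-- Partial maps, multiplied by letting the left factor take precedence. -/
abbrev Overlay (ι α : Type*) : Type _ := ι → Option α

namespace Overlay

variable {ι α : Type*}

instance : Semigroup (Overlay ι α) where
  mul x y i := (x i).or (y i)
  mul_assoc _ _ _ := funext fun _ => Option.or_assoc

lemma mul_apply (x y : Overlay ι α) (i : ι) : (x * y) i = (x i).or (y i) := rfl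

lemma seqProd_apply_eq_none {c : ℕ → Overlay ι α} {n : ℕ} {j : ι}
    (h : ∀ i ≤ n, c i j = none) : seqProd c n j = none := by
  induction n generalizing c with
  | zero => exact h 0 le_rfl
  | succ n ih =>
    rw [seqProd, mul_apply, h 0 (Nat.zero_le _), Option.none_or]
    exact ih fun i hi => h (i + 1) (by omega)

lemma seqProd_apply_eq {c : ℕ → Overlay ι α} {n i : ℕ} {j : ι} (hi : i ≤ n)
    (hbefore : ∀ i' < i, c i' j = none) (hsome : (c i j).isSome) : seqProd c n j = c i j := by
  induction n generalizing c i with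
  | zero =>
    obtain rfl : i = 0 := by omega
    rfl
  | succ n ih =>
    rw [seqProd, mul_apply]
    rcases i with _ | i
    · obtain ⟨a, ha⟩ := Option.isSome_iff_exists.mp hsome
      rw [ha, Option.some_or]
    · rw [hbefore 0 (Nat.zero_lt_succ _), Option.none_or]
      exact ih (by omega) (fun i' hi' => hbefore (i' + 1) (by omega)) hsome

end Overlay

attribute [local instance] Ultrafilter.semigroup

section IdempotentUltrafilter

variable {M : Type*} [Semigroup M]

theorem Ultrafilter.exists_idempotent_forall_mem {P : Set M → Prop}
    (hmono : ∀ s t, s ⊆ t → P s → P t) (huniv : P Set.univ) (hempty : ¬P ∅)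
    (hunion : ∀ s t, P (s ∪ t) → P s ∨ P t)
    (hmul : ∀ U V : Ultrafilter M, (∀ s ∈ U, P s) → (∀ s ∈ V, P s) → ∀ s ∈ U * V, P s) :
    ∃ U : Ultrafilter M, U * U = U ∧ ∀ s ∈ U, P s := by
  let F : Filter M := Filter.comk (fun s => ¬P s) hempty
    (fun t ht s hst hs => ht (hmono s t hst hs))
    (fun s hs t ht hst => (hunion s t hst).elim hs ht)
  have hF : F.NeBot := ⟨fun h => by
    have : ∅ ∈ F := h ▸ Filter.mem_bot
    simp only [F, Filter.mem_comk, Set.compl_empty] at this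
    exact this huniv⟩
  obtain ⟨U₀, hU₀⟩ := Ultrafilter.exists_le F
  have hclosed : IsClosed {U : Ultrafilter M | ∀ s ∈ U, P s} := by
    have : {U : Ultrafilter M | ∀ s ∈ U, P s} = ⋂ (s : Set M) (_ : ¬P s), {U | sᶜ ∈ U} := by
      ext U
      simp only [Set.mem_iInter, Set.mem_ofPred_eq, Ultrafilter.compl_mem_iff_notMem]
      exact ⟨fun h s hs hsU => hs (h s hsU), fun h s hsU => by_contra fun hs => h s hs hsU⟩
    rw [this]
    exact isClosed_iInter fun s => isClosed_iInter fun _ => ultrafilter_isClosed_basic _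
  have hU₀P : ∀ s ∈ U₀, P s := fun s hs =>
    by_contra fun h => Ultrafilter.compl_mem_iff_notMem.mp (hU₀ (by simpa [F])) hs
  obtain ⟨U, hU, hUU⟩ := exists_idempotent_in_compact_subsemigroup
    Ultrafilter.continuous_mul_left {U : Ultrafilter M | ∀ s ∈ U, P s} ⟨U₀, hU₀P⟩
    hclosed.isCompact (fun U hU V hV => hmul U V hU hV)
  exact ⟨U, hUU, hU⟩

theorem exists_seq_forall_seqProd_mem {U : Ultrafilter M} (hU : U * U = U) {σ : Type*}
    (W A : σ → Set M) (hW : ∀ x, (W x).Finite) (Follows : ℕ → σ → σ → Prop)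
    (hFollows : ∀ k x, A x ∈ U → ∀ S ∈ U, ∃ y, Follows k x y ∧ A y ∈ U ∧ W y ⊆ S)
    (h₀ : ∃ x, A x ∈ U) :
    ∃ F : ℕ → σ, (∀ k, Follows k (F k) (F (k + 1))) ∧
      ∀ k n (c : ℕ → M), (∀ i ≤ n, c i ∈ W (F (k + i + 1))) → seqProd c n ∈ A (F k) := by
  /- The recursion carries a block `x` and a `U`-large set `S` of admissible tails: every
  product of words from the blocks after `x` will lie in `S ∩ A x`. -/
  have step : ∀ k (p : σ × Set M), A p.1 ∈ U → p.2 ∈ U → ∃ q : σ × Set M,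
      Follows k p.1 q.1 ∧ A q.1 ∈ U ∧ q.2 ∈ U ∧ W q.1 ⊆ p.2 ∩ A p.1 ∧
        ∀ w ∈ W q.1, ∀ z ∈ q.2, w * z ∈ p.2 ∩ A p.1 := by
    rintro k ⟨x, S⟩ hx hS
    have hT : S ∩ A x ∈ U := inter_mem hS hx
    have hR : S ∩ A x ∩ {w | ∀ᶠ z in U, w * z ∈ S ∩ A x} ∈ U := by
      refine inter_mem hT ?_
      rw [← hU] at hT
      exact (Ultrafilter.eventually_mul U U (· ∈ S ∩ A x)).mp hT
    obtain ⟨y, hy, hAy, hWy⟩ := hFollows k x hx _ hR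
    refine ⟨(y, {z | ∀ w ∈ W y, w * z ∈ S ∩ A x}), hy, hAy, ?_, fun w hw => (hWy hw).1,
      fun w hw z hz => hz w hw⟩
    exact (eventually_all_finite (hW y)).mpr fun w hw => (hWy hw).2
  choose! next hnext using step
  obtain ⟨x₀, hx₀⟩ := h₀
  let st : ℕ → σ × Set M := fun k => Nat.rec (x₀, Set.univ) (fun k p => next k p) k
  have hst : ∀ k, A (st k).1 ∈ U ∧ (st k).2 ∈ U := by
    intro k
    induction k with
    | zero => exact ⟨hx₀, univ_mem⟩
    | succ k ih => exact ⟨(hnext k _ ih.1 ih.2).2.1, (hnext k _ ih.1 ih.2).2.2.1⟩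
  have hprod : ∀ n k (c : ℕ → M), (∀ i ≤ n, c i ∈ W (st (k + i + 1)).1) →
      seqProd c n ∈ (st k).2 ∩ A (st k).1 := by
    intro n
    induction n with
    | zero => exact fun k c hc => (hnext k _ (hst k).1 (hst k).2).2.2.2.1 (hc 0 le_rfl)
    | succ n ih =>
      intro k c hc
      refine (hnext k _ (hst k).1 (hst k).2).2.2.2.2 _ (hc 0 (Nat.zero_le _)) _
        (ih (k + 1) _ fun i hi => ?_).1
      rw [show k + 1 + i + 1 = k + (i + 1) + 1 by omega]
      exact hc (i + 1) (by omega)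
  exact ⟨fun k => (st k).1, fun k => (hnext k _ (hst k).1 (hst k).2).1,
    fun k n c hc => (hprod n k c hc).2⟩

end IdempotentUltrafilter

lemma Nat.exists_lt_le_succ (e : ℕ → ℕ) {p n : ℕ} (h0 : e 0 < p) (hn : p ≤ e n) :
    ∃ k < n, e k < p ∧ p ≤ e (k + 1) := by
  induction n with
  | zero => omega
  | succ n ih =>
    by_cases h : p ≤ e n
    · obtain ⟨k, hk, hkp⟩ := ih h
      exact ⟨k, by omega, hkp⟩
    · exact ⟨n, by omega, by omega, hn⟩

section Tight

variable {t : ℕ → Creature1}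

lemma mdn_strictMono (ht : ∀ n, (t n).mup = (t (n + 1)).mdn) : StrictMono fun p => (t p).mdn :=
  strictMono_nat_of_lt_succ fun n => ht n ▸ (t n).hm

lemma mup_mono (ht : ∀ n, (t n).mup = (t (n + 1)).mdn) {p q : ℕ} (h : p ≤ q) :
    (t p).mup ≤ (t q).mup := by
  rw [ht, ht]
  exact (mdn_strictMono ht).monotone (by omega)

lemma mdn_le_iff_of_mem_u (ht : ∀ n, (t n).mup = (t (n + 1)).mdn) {e p j : ℕ}
    (hj : j ∈ (t p).u) : (t e).mdn ≤ j ↔ e ≤ p := by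
  obtain ⟨h₁, h₂⟩ := Finset.mem_Ico.mp ((t p).hu hj)
  refine ⟨fun h => ?_, fun h => ((mdn_strictMono ht).monotone h).trans h₁⟩
  by_contra hlt
  have := (mdn_strictMono ht).monotone (show p + 1 ≤ e by omega)
  simp only [← ht p] at this
  omega

lemma eq_of_mem_u (ht : ∀ n, (t n).mup = (t (n + 1)).mdn) {p q j : ℕ}
    (hp : j ∈ (t p).u) (hq : j ∈ (t q).u) : p = q :=
  le_antisymm ((mdn_le_iff_of_mem_u ht hq).mp (Finset.mem_Ico.mp ((t p).hu hp)).1)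
    ((mdn_le_iff_of_mem_u ht hp).mp (Finset.mem_Ico.mp ((t q).hu hq)).1)

end Tight

/-- `f` is a union `g_a ∪ ⋯ ∪ g_b` with `g_p ∈ val[t_p]`; this is the clause on `val` in
`Sigma1 t a b`. -/
def IsUnionOn (t : ℕ → Creature1) (a b : ℕ) (f : ℕ → Option ℕ) : Prop :=
  ∃ g : ℕ → (ℕ → Option ℕ), (∀ p, a ≤ p → p ≤ b → g p ∈ (t p).val) ∧
    (∀ p, a ≤ p → p ≤ b → ∀ j ∈ (t p).u, f j = g p j) ∧
    (∀ j, (∀ p, a ≤ p → p ≤ b → j ∉ (t p).u) → f j = none)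

namespace IsUnionOn

variable {t : ℕ → Creature1} {a b : ℕ} {f : ℕ → Option ℕ}

lemma isSome_iff (hf : IsUnionOn t a b f) {j : ℕ} :
    (f j).isSome ↔ ∃ p, a ≤ p ∧ p ≤ b ∧ j ∈ (t p).u := by
  obtain ⟨g, hg, hfg, hnone⟩ := hf
  constructor
  · intro h
    by_contra! hj
    simp [hnone j hj] at h
  · rintro ⟨p, hap, hpb, hj⟩
    rw [hfg p hap hpb j hj]
    exact ((t p).hdom _ (hg p hap hpb) j).mpr hj

lemma lt_succ_of_apply_eq_some (hf : IsUnionOn t a b f) {j c : ℕ} (h : f j = some c) :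
    c < j + 1 := by
  obtain ⟨p, hap, hpb, hj⟩ := hf.isSome_iff.mp (Option.isSome_iff_exists.mpr ⟨c, h⟩)
  obtain ⟨g, hg, hfg, -⟩ := hf
  exact (t p).hran _ (hg p hap hpb) j c (hfg p hap hpb j hj ▸ h)

lemma apply_eq_none_of_lt (ht : ∀ n, (t n).mup = (t (n + 1)).mdn) (hf : IsUnionOn t a b f)
    {p j : ℕ} (hj : j ∈ (t p).u) (hbp : b < p) : f j = none := by
  by_contra h
  obtain ⟨q, -, hqb, hjq⟩ := hf.isSome_iff.mp (Option.ne_none_iff_isSome.mp h)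
  exact absurd (eq_of_mem_u ht hj hjq) (by omega)

lemma restrictFrom (ht : ∀ n, (t n).mup = (t (n + 1)).mdn) (hf : IsUnionOn t 0 b f) :
    IsUnionOn t a b (restrictFrom (t a).mdn f) := by
  obtain ⟨g, hg, hfg, hnone⟩ := hf
  refine ⟨g, fun p _ hpb => hg p (Nat.zero_le _) hpb, fun p hap hpb j hj => ?_, fun j hj => ?_⟩
  · rw [restrictFrom_apply, if_pos ((mdn_le_iff_of_mem_u ht hj).mpr hap)]
    exact hfg p (Nat.zero_le _) hpb j hj
  · rw [restrictFrom_apply]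
    split_ifs with haj
    · refine hnone j fun p _ hpb hjp => hj p ?_ hpb hjp
      exact (mdn_le_iff_of_mem_u ht hjp).mp haj
    · rfl

lemma mul (ht : ∀ n, (t n).mup = (t (n + 1)).mdn) {x y : Overlay ℕ ℕ} {b' : ℕ}
    (hx : IsUnionOn t 0 b x) (hy : IsUnionOn t 0 b' y) (hbb' : b ≤ b') :
    IsUnionOn t 0 b' (x * y) := by
  classical
  obtain ⟨g, hg, hxg, hxnone⟩ := hx
  obtain ⟨g', hg', hyg', hynone⟩ := hy
  refine ⟨fun p => if p ≤ b then g p else g' p, fun p _ hp => ?_, fun p _ hp j hj => ?_,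
    fun j hj => ?_⟩
  · show (if p ≤ b then g p else g' p) ∈ _
    split_ifs with hpb
    · exact hg p (Nat.zero_le _) hpb
    · exact hg' p (Nat.zero_le _) hp
  · rw [Overlay.mul_apply]
    show _ = (if p ≤ b then g p else g' p) j
    split_ifs with hpb
    · rw [hxg p (Nat.zero_le _) hpb j hj]
      obtain ⟨c, hc⟩ := Option.isSome_iff_exists.mp
        (((t p).hdom _ (hg p (Nat.zero_le _) hpb) j).mpr hj)
      rw [hc, Option.some_or]
    · rw [hxnone j fun q _ hqb hjq => hpb (eq_of_mem_u ht hj hjq ▸ hqb), Option.none_or]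
      exact hyg' p (Nat.zero_le _) hp j hj
  · rw [Overlay.mul_apply, hynone j hj, Option.or_none]
    exact hxnone j fun q hq hqb => hj q hq (hqb.trans hbb')

lemma eq_of_isUnionOn (ht : ∀ n, (t n).mup = (t (n + 1)).mdn) {b' : ℕ}
    (hf : IsUnionOn t 0 b f) (hf' : IsUnionOn t 0 b' f) : b = b' := by
  have key : ∀ {b b'}, IsUnionOn t 0 b f → IsUnionOn t 0 b' f → b' ≤ b := by
    intro b b' hf hf'
    by_contra hlt
    have hsome := hf'.isSome_iff.mpr ⟨b', Nat.zero_le _, le_rfl, (t b').hidx⟩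
    rw [hf.apply_eq_none_of_lt ht (t b').hidx (by omega)] at hsome
    exact Bool.false_ne_true hsome
  exact le_antisymm (key hf' hf) (key hf hf')

end IsUnionOn

lemma exists_isUnionOn (t : ℕ → Creature1) (ht : ∀ n, (t n).mup = (t (n + 1)).mdn) (a b : ℕ)
    {g : ℕ → (ℕ → Option ℕ)} (hg : ∀ p, a ≤ p → p ≤ b → g p ∈ (t p).val) :
    ∃ f, IsUnionOn t a b f ∧ ∀ p, a ≤ p → p ≤ b → ∀ j ∈ (t p).u, f j = g p j := by
  classical
  let f : ℕ → Option ℕ := fun j =>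
    if h : ∃ p, a ≤ p ∧ p ≤ b ∧ j ∈ (t p).u then g h.choose j else none
  have hfg : ∀ p, a ≤ p → p ≤ b → ∀ j ∈ (t p).u, f j = g p j := by
    intro p hap hpb j hj
    have h : ∃ p, a ≤ p ∧ p ≤ b ∧ j ∈ (t p).u := ⟨p, hap, hpb, hj⟩
    simp only [f, dif_pos h, eq_of_mem_u ht h.choose_spec.2.2 hj]
  refine ⟨f, ⟨g, hg, hfg, fun j hj => dif_neg ?_⟩, hfg⟩
  rintro ⟨p, hap, hpb, hjp⟩
  exact hj p hap hpb hjp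

/-- A candidate creature on `t_a, …, t_last`: its norm lives on `t_m`, where `A = B`, and each
value `β ∈ B` at `i^{t_m}` is realised by the word `word β`, which runs over all of
`t_0, …, t_last` (it is cut down to `t_a, …, t_last` by `restrictFrom`). -/
structure Block where
  last : ℕ
  m : ℕ
  B : Finset ℕ
  word : ℕ → Overlay ℕ ℕ

namespace Block

def words (x : Block) : Set (Overlay ℕ ℕ) := x.word '' x.B

structure IsValid (t : ℕ → Creature1) (a k : ℕ) (x : Block) : Prop where
  le_m : a ≤ x.m
  m_le : x.m ≤ x.last
  card_le : k ≤ x.B.card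
  subset_A : x.B ⊆ (t x.m).A
  isUnionOn : ∀ β ∈ x.B, IsUnionOn t 0 x.last (x.word β)
  word_idx : ∀ β ∈ x.B, x.word β (t x.m).idx = some β

variable {t : ℕ → Creature1} {a k : ℕ} {x : Block}

lemma IsValid.mono (hx : x.IsValid t a k) {a' k' : ℕ} (ha : a' ≤ a) (hk : k' ≤ k) :
    x.IsValid t a' k' :=
  ⟨ha.trans hx.le_m, hx.m_le, hk.trans hx.card_le, hx.subset_A, hx.isUnionOn, hx.word_idx⟩

lemma IsValid.restrict (hx : x.IsValid t a k) {B : Finset ℕ} (hB : B ⊆ x.B) {k' : ℕ}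
    (hk : k' ≤ B.card) : { x with B }.IsValid t a k' :=
  ⟨hx.le_m, hx.m_le, hk, hB.trans hx.subset_A, fun β hβ => hx.isUnionOn β (hB hβ),
    fun β hβ => hx.word_idx β (hB hβ)⟩

lemma IsValid.nonempty (hx : x.IsValid t a k) (hk : 0 < k) : x.B.Nonempty :=
  Finset.card_pos.mp (hk.trans_le hx.card_le)

end Block

def Supports (t : ℕ → Creature1) (X : Set (Overlay ℕ ℕ)) (a k : ℕ) : Prop :=
  ∃ x : Block, x.IsValid t a k ∧ x.words ⊆ X

def Large (t : ℕ → Creature1) (X : Set (Overlay ℕ ℕ)) : Prop := ∀ a k, Supports t X a k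

section Large

variable {t : ℕ → Creature1}

lemma Supports.mono {X Y : Set (Overlay ℕ ℕ)} {a k a' k' : ℕ} (h : Supports t X a k)
    (hXY : X ⊆ Y) (ha : a' ≤ a) (hk : k' ≤ k) : Supports t Y a' k' :=
  let ⟨x, hx, hxX⟩ := h
  ⟨x, hx.mono ha hk, hxX.trans hXY⟩

lemma Supports.of_union {X Y : Set (Overlay ℕ ℕ)} {a k : ℕ} (h : Supports t (X ∪ Y) a (k + k)) :
    Supports t X a k ∨ Supports t Y a k := by
  classical
  obtain ⟨x, hx, hxXY⟩ := h
  have hcard := Finset.card_filter_add_card_filter_not (s := x.B) (fun β => x.word β ∈ X)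
  have := hx.card_le
  rcases le_or_gt k (x.B.filter fun β => x.word β ∈ X).card with hk | hk
  · refine .inl ⟨_, hx.restrict (Finset.filter_subset _ _) hk, ?_⟩
    rintro _ ⟨β, hβ, rfl⟩
    exact (Finset.mem_filter.mp hβ).2
  · refine .inr ⟨_, hx.restrict (Finset.filter_subset (fun β => x.word β ∉ X) _) (by omega), ?_⟩
    rintro _ ⟨β, hβ, rfl⟩
    obtain ⟨hβB, hβX⟩ := Finset.mem_filter.mp hβ
    exact (hxXY ⟨β, hβB, rfl⟩).resolve_left hβX

lemma Large.of_union {X Y : Set (Overlay ℕ ℕ)} (h : Large t (X ∪ Y)) : Large t X ∨ Large t Y := by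
  by_contra! hXY
  obtain ⟨⟨a₁, k₁, hX⟩, ⟨a₂, k₂, hY⟩⟩ : (∃ a k, ¬Supports t X a k) ∧ ∃ a k, ¬Supports t Y a k := by
    simpa [Large] using hXY
  rcases (h (max a₁ a₂) (max k₁ k₂ + max k₁ k₂)).of_union with hs | hs
  · exact hX (hs.mono le_rfl (le_max_left _ _) (le_max_left _ _))
  · exact hY (hs.mono le_rfl (le_max_right _ _) (le_max_right _ _))

lemma exists_le_card_A (hnor : Tendsto (fun n => (t n).nor) atTop atTop) (a k : ℕ) :
    ∃ m, a ≤ m ∧ k ≤ (t m).A.card := by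
  obtain ⟨m, hkm, ham⟩ :=
    ((hnor.eventually_ge_atTop (k : ℝ)).and (eventually_ge_atTop a)).exists
  refine ⟨m, ham, ?_⟩
  have hpos : (0 : ℝ) < (t m).A.card := by exact_mod_cast (t m).hA.card_pos
  rw [(t m).hnor, Real.le_logb_iff_rpow_le one_lt_two hpos, Real.rpow_natCast] at hkm
  exact Nat.lt_two_pow_self.le.trans (by exact_mod_cast hkm)

lemma exists_word_idx (ht : ∀ n, (t n).mup = (t (n + 1)).mdn) {m β : ℕ} (hβ : β ∈ (t m).A) :
    ∃ w, IsUnionOn t 0 m w ∧ w (t m).idx = some β := by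
  classical
  obtain ⟨g, hg, hgβ⟩ := ((t m).hproj β).mp hβ
  obtain ⟨w, hw, hwg⟩ := exists_isUnionOn t ht 0 m
    (g := fun p => if p = m then g else (t p).hvalne.choose) fun p _ _ => by
      split_ifs with hpm
      · exact hpm ▸ hg
      · exact (t p).hvalne.choose_spec
  exact ⟨w, hw, by simpa [hgβ] using hwg m (Nat.zero_le _) le_rfl _ (t m).hidx⟩

lemma large_univ (ht : ∀ n, (t n).mup = (t (n + 1)).mdn)
    (hnor : Tendsto (fun n => (t n).nor) atTop atTop) : Large t Set.univ := by
  intro a k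
  obtain ⟨m, ham, hk⟩ := exists_le_card_A hnor a k
  choose! w hw hwβ using fun β (hβ : β ∈ (t m).A) => exists_word_idx ht hβ
  exact ⟨⟨m, m, (t m).A, w⟩, ⟨ham, le_rfl, hk, subset_rfl, hw, hwβ⟩, Set.subset_univ _⟩

lemma not_large_empty : ¬Large t ∅ := fun h => by
  obtain ⟨x, hx, hxX⟩ := h 0 1
  obtain ⟨β, hβ⟩ := hx.nonempty one_pos
  exact hxX ⟨β, hβ, rfl⟩

lemma large_of_mem_mul (ht : ∀ n, (t n).mup = (t (n + 1)).mdn)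
    {U V : Ultrafilter (Overlay ℕ ℕ)} (hU : ∀ X ∈ U, Large t X) (hV : ∀ X ∈ V, Large t X)
    {X : Set (Overlay ℕ ℕ)} (hX : X ∈ U * V) : Large t X := by
  intro a k
  obtain ⟨x, hx, hxX⟩ := hU _ ((Ultrafilter.eventually_mul U V (· ∈ X)).mp hX) a k
  have hZ : {z | ∀ β ∈ x.B, x.word β * z ∈ X} ∈ V :=
    (eventually_all_finset x.B).mpr fun β hβ => hxX ⟨β, hβ, rfl⟩
  obtain ⟨y, hy, hyZ⟩ := hV _ hZ (x.last + 1) 1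
  obtain ⟨γ, hγ⟩ := hy.nonempty one_pos
  have hlast : x.last ≤ y.last := by have := hy.le_m; have := hy.m_le; omega
  refine ⟨⟨y.last, x.m, x.B, fun β => x.word β * y.word γ⟩,
    ⟨hx.le_m, hx.m_le.trans hlast, hx.card_le, hx.subset_A,
      fun β hβ => (hx.isUnionOn β hβ).mul ht (hy.isUnionOn γ hγ) hlast,
      fun β hβ => by simp only [Overlay.mul_apply, hx.word_idx β hβ, Option.some_or]⟩, ?_⟩
  rintro _ ⟨β, hβ, rfl⟩
  exact hyZ ⟨γ, hγ, rfl⟩ β hβ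

theorem exists_idempotent_large (ht : ∀ n, (t n).mup = (t (n + 1)).mdn)
    (hnor : Tendsto (fun n => (t n).nor) atTop atTop) :
    ∃ U : Ultrafilter (Overlay ℕ ℕ), U * U = U ∧ ∀ X ∈ U, Large t X :=
  Ultrafilter.exists_idempotent_forall_mem (fun _ _ hXY hX a k => (hX a k).mono hXY le_rfl le_rfl)
    (large_univ ht hnor) not_large_empty (fun _ _ => Large.of_union)
    (fun _ _ hU hV _ => large_of_mem_mul ht hU hV)

end Large

def colorClass (t : ℕ → Creature1) (d : ℕ → (ℕ → Option ℕ) → ℕ) (e v : ℕ) :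
    Set (Overlay ℕ ℕ) :=
  {w | d e (restrictFrom (t e).mdn w) = v}

section Colors

variable {t : ℕ → Creature1} {d : ℕ → (ℕ → Option ℕ) → ℕ} {l : ℕ}

lemma exists_colorClass_mem (hd : ∀ k f, d k f < l) (U : Ultrafilter (Overlay ℕ ℕ)) (e : ℕ) :
    ∃ v < l, colorClass t d e v ∈ U := by
  have : ⋃ v ∈ Set.Iio l, colorClass t d e v ∈ U :=
    Filter.mem_of_superset univ_mem fun w _ => Set.mem_biUnion (hd e _) rfl
  simpa using (Ultrafilter.finite_biUnion_mem_iff (Set.finite_Iio l)).mp this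

/-- Blocks whose words lie in this set end where `v` is the `U`-majority colour for the next
start, which makes the colour independent of where a block starts. -/
lemma exists_majority_color (hd : ∀ k f, d k f < l) {U : Ultrafilter (Overlay ℕ ℕ)}
    (hU : ∀ X ∈ U, Large t X) :
    ∃ v < l, {w | ∃ b, IsUnionOn t 0 b w ∧ colorClass t d (b + 1) v ∈ U} ∈ U := by
  have hwords : {w : Overlay ℕ ℕ | ∃ b, IsUnionOn t 0 b w} ∈ U := by
    by_contra h
    obtain ⟨x, hx, hxX⟩ := hU _ (Ultrafilter.compl_mem_iff_notMem.mpr h) 0 1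
    obtain ⟨β, hβ⟩ := hx.nonempty one_pos
    exact hxX ⟨β, hβ, rfl⟩ ⟨x.last, hx.isUnionOn β hβ⟩
  have : ⋃ v ∈ Set.Iio l, {w | ∃ b, IsUnionOn t 0 b w ∧ colorClass t d (b + 1) v ∈ U} ∈ U := by
    refine Filter.mem_of_superset hwords ?_
    rintro w ⟨b, hb⟩
    obtain ⟨v, hv, hvU⟩ := exists_colorClass_mem hd U (b + 1)
    exact Set.mem_biUnion hv ⟨b, hb, hvU⟩
  simpa using (Ultrafilter.finite_biUnion_mem_iff (Set.finite_Iio l)).mp this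

theorem exists_blocks (ht : ∀ n, (t n).mup = (t (n + 1)).mdn) (hd : ∀ k f, d k f < l)
    {U : Ultrafilter (Overlay ℕ ℕ)} (hUU : U * U = U) (hU : ∀ X ∈ U, Large t X) :
    ∃ v < l, ∃ F : ℕ → Block, (∀ k, (F (k + 1)).IsValid t ((F k).last + 1) (k + 1)) ∧
      ∀ k n (c : ℕ → Overlay ℕ ℕ), (∀ i ≤ n, c i ∈ (F (k + i + 1)).words) →
        seqProd c n ∈ colorClass t d ((F k).last + 1) v := by
  obtain ⟨v, hv, hC⟩ := exists_majority_color hd hU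
  refine ⟨v, hv, exists_seq_forall_seqProd_mem hUU Block.words
    (fun x => colorClass t d (x.last + 1) v) (fun x => x.B.finite_toSet.image _)
    (fun k x y => y.IsValid t (x.last + 1) (k + 1)) ?_ ?_⟩
  · intro k x _ S hS
    obtain ⟨y, hy, hyS⟩ := hU _ (inter_mem hS hC) (x.last + 1) (k + 1)
    obtain ⟨β, hβ⟩ := hy.nonempty k.succ_pos
    obtain ⟨b, hb, hbU⟩ := (hyS ⟨β, hβ, rfl⟩).2
    obtain rfl : b = y.last := hb.eq_of_isUnionOn ht (hy.isUnionOn β hβ)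
    exact ⟨y, hy, hbU, fun w hw => (hyS hw).1⟩
  · -- only `last` of the initial block is ever used
    obtain ⟨w, b, -, hbU⟩ := Ultrafilter.nonempty_of_mem hC
    exact ⟨⟨b, 0, ∅, fun _ => w⟩, hbU⟩

end Colors

section Creatures

variable {t : ℕ → Creature1} {a k : ℕ} {x : Block}

lemma Block.IsValid.restrictFrom_word_idx (ht : ∀ n, (t n).mup = (t (n + 1)).mdn)
    (hx : x.IsValid t a k) {β : ℕ} (hβ : β ∈ x.B) :
    restrictFrom (t a).mdn (x.word β) (t x.m).idx = some β := by
  rw [restrictFrom_apply, if_pos ((mdn_le_iff_of_mem_u ht (t x.m).hidx).mpr hx.le_m)]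
  exact hx.word_idx β hβ

open Classical in
noncomputable def Block.toCreature (ht : ∀ n, (t n).mup = (t (n + 1)).mdn) (x : Block)
    (hx : x.IsValid t a (k + 1)) : Creature1 where
  mdn := (t a).mdn
  mup := (t x.last).mup
  hm := (t a).hm.trans_le (mup_mono ht (hx.le_m.trans hx.m_le))
  u := (Finset.Icc a x.last).biUnion fun p => (t p).u
  hu := by
    intro j hj
    obtain ⟨p, hp, hjp⟩ := Finset.mem_biUnion.mp hj
    obtain ⟨hap, hpl⟩ := Finset.mem_Icc.mp hp
    obtain ⟨h₁, h₂⟩ := Finset.mem_Ico.mp ((t p).hu hjp)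
    exact Finset.mem_Ico.mpr
      ⟨((mdn_strictMono ht).monotone hap).trans h₁, h₂.trans_le (mup_mono ht hpl)⟩
  idx := (t x.m).idx
  hidx := Finset.mem_biUnion.mpr ⟨x.m, Finset.mem_Icc.mpr ⟨hx.le_m, hx.m_le⟩, (t x.m).hidx⟩
  A := x.B
  hA := hx.nonempty k.succ_pos
  hAH c hc := (t x.m).hAH c (hx.subset_A hc)
  val := x.B.image fun β => restrictFrom (t a).mdn (x.word β)
  hvalne := (hx.nonempty k.succ_pos).image _
  hdom := by
    intro f hf j
    obtain ⟨β, hβ, rfl⟩ := Finset.mem_image.mp hf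
    rw [((hx.isUnionOn β hβ).restrictFrom ht).isSome_iff]
    simp only [Finset.mem_biUnion, Finset.mem_Icc, and_assoc]
  hran := by
    intro f hf
    obtain ⟨β, hβ, rfl⟩ := Finset.mem_image.mp hf
    exact fun j c => ((hx.isUnionOn β hβ).restrictFrom ht).lt_succ_of_apply_eq_some
  hproj c := by
    refine ⟨fun hc => ⟨_, Finset.mem_image_of_mem _ hc, hx.restrictFrom_word_idx ht hc⟩, ?_⟩
    rintro ⟨f, hf, hfc⟩
    obtain ⟨β, hβ, rfl⟩ := Finset.mem_image.mp hf
    rw [hx.restrictFrom_word_idx ht hβ] at hfc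
    exact Option.some_injective _ hfc ▸ hβ
  nor := Real.logb 2 x.B.card
  hnor := rfl

lemma Block.toCreature_mem_sigma1 (ht : ∀ n, (t n).mup = (t (n + 1)).mdn)
    (hx : x.IsValid t a (k + 1)) : x.toCreature ht hx ∈ Sigma1 t a x.last := by
  classical
  refine ⟨rfl, rfl, rfl, ⟨x.m, hx.le_m, hx.m_le, rfl, hx.subset_A⟩, fun f hf => ?_⟩
  obtain ⟨β, hβ, rfl⟩ := Finset.mem_image.mp hf
  exact (hx.isUnionOn β hβ).restrictFrom ht

lemma mdn_of_mem_sigmattTail1 {s : Creature1} (hs : s ∈ SigmattTail1 t k) : s.mdn = (t k).mdn :=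
  let ⟨_, hn⟩ := Set.mem_iUnion.mp hs
  hn.1

end Creatures

section BlockCreatures

variable {t : ℕ → Creature1}

lemma seqProd_apply_of_mem_u (ht : ∀ n, (t n).mup = (t (n + 1)).mdn) {e : ℕ → ℕ}
    (he : StrictMono e) {c : ℕ → Overlay ℕ ℕ} {n i p j : ℕ}
    (hc : ∀ i ≤ n, IsUnionOn t 0 (e (i + 1)) (c i)) (hi : i ≤ n) (hp : e i < p)
    (hp' : p ≤ e (i + 1)) (hj : j ∈ (t p).u) : seqProd c n j = c i j :=
  Overlay.seqProd_apply_eq hi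
    (fun i' hi' => (hc i' (by omega)).apply_eq_none_of_lt ht hj
      ((he.monotone (show i' + 1 ≤ i by omega)).trans_lt hp))
    ((hc i hi).isSome_iff.mpr ⟨p, Nat.zero_le _, hp', hj⟩)

lemma seqProd_apply_eq_none_of_forall_not_mem (ht : ∀ n, (t n).mup = (t (n + 1)).mdn)
    {e : ℕ → ℕ} {c : ℕ → Overlay ℕ ℕ} {n j : ℕ}
    (hc : ∀ i ≤ n, IsUnionOn t 0 (e (i + 1)) (c i)) (hj₀ : (t (e 0 + 1)).mdn ≤ j)
    (hj : ∀ i ≤ n, ∀ p, e i < p → p ≤ e (i + 1) → j ∉ (t p).u) : seqProd c n j = none := by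
  refine Overlay.seqProd_apply_eq_none fun i hi => ?_
  by_contra hne
  obtain ⟨p, -, hp, hjp⟩ := (hc i hi).isSome_iff.mp (Option.ne_none_iff_isSome.mp hne)
  obtain ⟨i', hi', hi'p⟩ := Nat.exists_lt_le_succ e ((mdn_le_iff_of_mem_u ht hjp).mp hj₀) hp
  exact hj i' (by omega) p hi'p.1 hi'p.2 hjp

noncomputable def blockCreatures (ht : ∀ n, (t n).mup = (t (n + 1)).mdn) (F : ℕ → Block)
    (hF : ∀ k, (F (k + 1)).IsValid t ((F k).last + 1) (k + 1)) (k : ℕ) : Creature1 :=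
  (F (k + 1)).toCreature ht (hF k)

variable {F : ℕ → Block}

lemma last_lt_last (hF : ∀ k, (F (k + 1)).IsValid t ((F k).last + 1) (k + 1)) (k : ℕ) :
    (F k).last < (F (k + 1)).last := by
  have := (hF k).le_m
  have := (hF k).m_le
  omega

lemma pctt1_blockCreatures (ht : ∀ n, (t n).mup = (t (n + 1)).mdn)
    (hF : ∀ k, (F (k + 1)).IsValid t ((F k).last + 1) (k + 1)) :
    PCtt1 (blockCreatures ht F hF) := by
  refine ⟨fun n => ht _, tendsto_atTop_mono (fun n => ?_) <| (Real.tendsto_logb_atTop one_lt_two).comp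
    (tendsto_natCast_atTop_atTop.comp (tendsto_add_atTop_nat 1))⟩
  simp only [Function.comp_apply, Nat.cast_add, Nat.cast_one]
  exact Real.logb_le_logb_of_le one_lt_two (by positivity) (by exact_mod_cast (hF n).card_le)

lemma le1_blockCreatures (ht : ∀ n, (t n).mup = (t (n + 1)).mdn)
    (hF : ∀ k, (F (k + 1)).IsValid t ((F k).last + 1) (k + 1)) :
    le1 (blockCreatures ht F hF) t := by
  refine ⟨fun k => (F k).last + 1, strictMono_nat_of_lt_succ fun k => ?_, fun k => ?_⟩
  · have := last_lt_last hF k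
    omega
  · rw [Nat.add_sub_cancel]
    exact Block.toCreature_mem_sigma1 ht (hF k)

lemma exists_seqProd_of_mem_postt1 (ht : ∀ n, (t n).mup = (t (n + 1)).mdn)
    (hF : ∀ k, (F (k + 1)).IsValid t ((F k).last + 1) (k + 1)) {i : ℕ} {f : ℕ → Option ℕ}
    (hf : f ∈ postt1 (blockCreatures ht F hF) i) :
    ∃ n, ∃ c : ℕ → Overlay ℕ ℕ, (∀ i' ≤ n, c i' ∈ (F (i + i' + 1)).words) ∧
      f = restrictFrom (t ((F i).last + 1)).mdn (seqProd c n) := by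
  classical
  obtain ⟨n, g, hg, hfg, hfnone⟩ := hf
  choose! β hβ hgβ using fun i' (hi' : i' ≤ n) => Finset.mem_image.mp (hg i' hi')
  let e : ℕ → ℕ := fun i' => (F (i + i')).last
  have he : StrictMono e := strictMono_nat_of_lt_succ fun i' => last_lt_last hF (i + i')
  have hc : ∀ i' ≤ n, IsUnionOn t 0 (e (i' + 1)) ((F (i + i' + 1)).word (β i')) :=
    fun i' hi' => (hF (i + i')).isUnionOn _ (hβ i' hi')
  refine ⟨n, fun i' => (F (i + i' + 1)).word (β i'), fun i' hi' => ⟨_, hβ i' hi', rfl⟩,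
    funext fun j => ?_⟩
  rw [restrictFrom_apply]
  by_cases hj : ∃ i' ≤ n, ∃ p, e i' < p ∧ p ≤ e (i' + 1) ∧ j ∈ (t p).u
  · obtain ⟨i', hi', p, hp, hp', hjp⟩ := hj
    have hmem : j ∈ (blockCreatures ht F hF (i + i')).u :=
      Finset.mem_biUnion.mpr ⟨p, Finset.mem_Icc.mpr ⟨hp, hp'⟩, hjp⟩
    rw [hfg i' hi' j hmem, ← hgβ i' hi', restrictFrom_apply, if_pos, if_pos,
      seqProd_apply_of_mem_u ht he hc hi' hp hp' hjp]
    · exact (mdn_le_iff_of_mem_u ht hjp).mpr ((he.monotone (Nat.zero_le i')).trans_lt hp)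
    · exact (mdn_le_iff_of_mem_u ht hjp).mpr hp
  · push Not at hj
    rw [hfnone j fun i' hi' hmem => ?_]
    · split_ifs with hj₀
      · exact (seqProd_apply_eq_none_of_forall_not_mem ht hc hj₀ hj).symm
      · rfl
    obtain ⟨p, hp, hjp⟩ := Finset.mem_biUnion.mp hmem
    exact hj i' hi' p (Finset.mem_Icc.mp hp).1 (Finset.mem_Icc.mp hp).2 hjp

end BlockCreatures

theorem stmt12_general (t : ℕ → Creature1) (ht : PCtt1 t)
    (l : ℕ)
    (d : ℕ → (ℕ → Option ℕ) → ℕ) (hd : ∀ k f, d k f < l) :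
    ∃ s : ℕ → Creature1, PCtt1 s ∧ le1 s t ∧
      ∃ l' < l, ∀ i k, s i ∈ SigmattTail1 t k →
        ∀ f ∈ postt1 s i, d k f = l' := by
  obtain ⟨htight, hnor⟩ := ht
  obtain ⟨U, hUU, hU⟩ := exists_idempotent_large htight hnor
  obtain ⟨v, hv, F, hF, hprod⟩ := exists_blocks htight hd hUU hU
  refine ⟨blockCreatures htight F hF, pctt1_blockCreatures htight hF, le1_blockCreatures htight hF,
    v, hv, fun i k hk f hf => ?_⟩
  obtain rfl : k = (F i).last + 1 :=
    ((mdn_strictMono htight).injective (mdn_of_mem_sigmattTail1 hk).symm)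
  obtain ⟨n, c, hc, rfl⟩ := exists_seqProd_of_mem_postt1 htight hF hf
  exact hprod i n c hc

theorem stmt12 (t : ℕ → Creature1) (ht : PCtt1 t)
    (l : ℕ) (hl : 1 ≤ l)
    (d : ℕ → (ℕ → Option ℕ) → ℕ) (hd : ∀ k f, d k f < l) :
    ∃ s : ℕ → Creature1, PCtt1 s ∧ le1 s t ∧
      ∃ l' < l, ∀ i k, s i ∈ SigmattTail1 t k →
        ∀ f ∈ postt1 s i, d k f = l' :=
  stmt12_general t ht l d hd
end

section
/- Let k ≥ 1, let t̄ ∈ R(K_2, Σ_2), let j ≥ k−1, and for a sequence v̄ ∈ R(K_2, Σ_2) with r_{k−1}(v̄) = r_{k−1}(t̄) let X(v̄, j) = {x : (v_0, …, v_{k−2}, x) ∈ r_k[k−1, v̄]} ∩ (⋃_{n≥j} Σ_2(v_j, …, v_n)). Then for any 2-coloring c′ of X(t̄, j) (extended to all such sets), there is a t̄^j ∈ [j, t̄] such that c′ is constant on X(t̄^j, j). -/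
open Filter

/- Example 2.11 of Roslanowski–Shelah.  H_2(n) = 2.  An element of K_2 is an FP
creature t = (nor[t], val[t], dis[t], m^t_dn, m^t_up) with ∅ ≠ dis[t] ⊆ [m^t_dn, m^t_up),
∅ ≠ val[t] ⊆ 2^{dis[t]} and nor[t] = log₂|val[t]|.  Partial finitary functions are
modelled as f : ℕ → Option ℕ, with domain {j | (f j).isSome}. -/
structure Creature2 where
  mdn : ℕ
  mup : ℕ
  hm : mdn < mup
  dis : Finset ℕ
  hdisne : dis.Nonempty
  hdis : dis ⊆ Finset.Ico mdn mup
  val : Finset (ℕ → Option ℕ)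
  hvalne : val.Nonempty
  hdom : ∀ f ∈ val, ∀ j, (f j).isSome ↔ j ∈ dis
  hran : ∀ f ∈ val, ∀ j a, f j = some a → a < 2
  nor : ℝ
  hnor : nor = Real.logb 2 (val.card)

/- Σ_2(s̄↾u) for a nonempty finite u ⊆ ω (with s̄↾u = (s_i : i ∈ u)): creatures t with
m^t_dn = m^{s_{min u}}_dn, m^t_up = m^{s_{max u}}_up, and dis[t] = dis[s_{l*}],
val[t] ⊆ val[s_{l*}] for some l* ∈ u. -/

def Sigma2 (s : ℕ → Creature2) (u : Finset ℕ) : Set Creature2 :=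
  {t | ∃ hu : u.Nonempty,
    t.mdn = (s (u.min' hu)).mdn ∧ t.mup = (s (u.max' hu)).mup ∧
    ∃ l ∈ u, t.dis = (s l).dis ∧ t.val ⊆ (s l).val}

/- Pure candidates: m^{t_n}_up ≤ m^{t_{n+1}}_dn and nor[t_n] → ∞. -/

def PC2 (t : ℕ → Creature2) : Prop :=
  (∀ n, (t n).mup ≤ (t (n + 1)).mdn) ∧
  Tendsto (fun n => (t n).nor) atTop atTop

/- t̄ ≤ s̄ iff there are finite nonempty u_n ⊆ ω with max(u_n) < min(u_{n+1}) and
t_n ∈ Σ_2(s̄↾u_n) for all n. -/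

def le2 (t s : ℕ → Creature2) : Prop :=
  ∃ u : ℕ → Finset ℕ, (∀ n, (u n).Nonempty) ∧
    (∀ n, ∀ a ∈ u n, ∀ b ∈ u (n + 1), a < b) ∧
    ∀ n, t n ∈ Sigma2 s (u n)

/- Membership in R(K_2, Σ_2): pure candidates with |val[t_l]| = l + 1 for all l. -/

def R2cond (t : ℕ → Creature2) : Prop :=
  PC2 t ∧ ∀ l, (t l).val.card = l + 1

/- r_k(t̄) = (t_0, …, t_{k−1}). -/

def restr2 (t : ℕ → Creature2) (k : ℕ) : List Creature2 :=
  List.ofFn (fun i : Fin k => t i.1)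

/- X(v̄, j) = {x : (v_0, …, v_{k−2}, x) ∈ r_k[k−1, v̄]} ∩ (⋃_{n≥j} Σ_2(v_j, …, v_n)),
i.e. last entries of k-approximations of members of [k−1, v̄] which moreover lie in
some Σ_2(v_j, …, v_n) with n ≥ j. -/

def X2 (v : ℕ → Creature2) (k j : ℕ) : Set Creature2 :=
  {x | (∃ s : ℕ → Creature2, R2cond s ∧ le2 s v ∧
        restr2 s (k - 1) = restr2 v (k - 1) ∧ s (k - 1) = x) ∧
       ∃ n, j ≤ n ∧ x ∈ Sigma2 v (Finset.Icc j n)}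

/-! A member `x` of `X(t̄ʲ, j)` is determined by its frame, its domain and its value set, a
`k`-element set; its frame starts at `t_j`, so its colour is a colour of a triple `(p, S, q)`: the
creature `t_p` supplying `dis[x]` and `val[x] = S ⊆ val[t_p]`, and the creature `t_q` ending the
frame. Letting `q` run along a nonprincipal ultrafilter colours the `k`-subsets of each `val[t_p]`;
by the finite Ramsey theorem, for one colour `ε` and infinitely many `p` there are arbitrarily large
subsets of `val[t_p]` all of whose `k`-subsets get `ε`. Choosing `p₀ < q₀ < p₁ < q₁ < ⋯`
inductively, each `q_n` good for all earlier pivots, the creatures `t̄ʲ_{j+n}` spread over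
`t_{p_n}, …, t_{q_n}` with pivot `t_{p_n}` give the required `t̄ʲ`. -/

/-- The arrow relation `N → (m)^k_2` for finsets of `α`. -/

def RamseyArrow (α : Type*) (N m k : ℕ) : Prop :=
  ∀ (A : Finset α) (c : Finset α → Bool), N ≤ A.card →
    ∃ B ⊆ A, B.card = m ∧ ∃ ε, ∀ S ⊆ B, S.card = k → c S = ε

theorem exists_endHomogeneous_subset_s14 {α : Type*} [LinearOrder α] {k : ℕ}
    (hk : ∀ m, ∃ N, RamseyArrow α N m k) (s : ℕ) :
    ∃ N, ∀ (A : Finset α) (c : Finset α → Bool), N ≤ A.card →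
      ∃ B ⊆ A, B.card = s ∧ ∃ f : α → Bool,
        ∀ S ⊆ B, ∀ hS : S.Nonempty, S.card = k + 1 → c S = f (S.min' hS) := by
  induction s with
  | zero =>
    refine ⟨0, fun A c _ => ⟨∅, Finset.empty_subset _, rfl, fun _ => true, ?_⟩⟩
    intro S hS hne
    exact absurd (Finset.subset_empty.mp hS) hne.ne_empty
  | succ s ih =>
    obtain ⟨N', hN'⟩ := ih
    obtain ⟨N, hN⟩ := hk N'
    refine ⟨N + 1, fun A c hA => ?_⟩
    have hAne : A.Nonempty := Finset.card_pos.mp (by omega)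
    set a := A.min' hAne
    have haA : a ∈ A := A.min'_mem hAne
    obtain ⟨H, hHA, hHcard, w, hw⟩ := hN (A.erase a) (fun S => c (insert a S))
      (by rw [Finset.card_erase_of_mem haA]; omega)
    obtain ⟨B, hBH, hBcard, f, hf⟩ := hN' H c hHcard.ge
    have haB : a ∉ B := fun h => Finset.notMem_erase a A (hHA (hBH h))
    refine ⟨insert a B, Finset.insert_subset haA ((hBH.trans hHA).trans (A.erase_subset a)),
      by rw [Finset.card_insert_of_notMem haB, hBcard], Function.update f a w, ?_⟩
    intro S hS hne hcard
    by_cases haS : a ∈ S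
    · have hmin : S.min' hne = a := by
        refine le_antisymm (S.min'_le a haS) (S.le_min' hne a fun y hy => A.min'_le y ?_)
        rcases Finset.mem_insert.mp (hS hy) with rfl | hyB
        · exact haA
        · exact A.erase_subset a (hHA (hBH hyB))
      rw [hmin, Function.update_self, ← Finset.insert_erase haS]
      refine hw _ ((Finset.subset_insert_iff.mp hS).trans hBH) ?_
      rw [Finset.card_erase_of_mem haS, hcard, Nat.add_sub_cancel]
    · have hSB : S ⊆ B := (Finset.subset_insert_iff_of_notMem haS).mp hS
      have hne' : S.min' hne ≠ a := fun h => haS (h ▸ S.min'_mem hne)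
      rw [Function.update_of_ne hne']
      exact hf S hSB hne hcard

theorem exists_ramseyArrow (α : Type*) (k m : ℕ) : ∃ N, RamseyArrow α N m k := by
  let _ : LinearOrder α := IsWellOrder.linearOrder WellOrderingRel
  induction k generalizing m with
  | zero =>
    refine ⟨m, fun A c hA => ?_⟩
    obtain ⟨B, hBA, hBcard⟩ := Finset.exists_subset_card_eq hA
    exact ⟨B, hBA, hBcard, c ∅, fun S _ hS => by rw [Finset.card_eq_zero.mp hS]⟩
  | succ k ih =>
    obtain ⟨N, hN⟩ := exists_endHomogeneous_subset_s14 ih (2 * m)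
    refine ⟨N, fun A c hA => ?_⟩
    obtain ⟨B₀, hB₀A, hB₀card, f, hf⟩ := hN A c hA
    obtain ⟨ε, -, hε⟩ := Finset.exists_le_card_fiber_of_mul_le_card_of_maps_to
      (fun x _ => Finset.mem_univ (f x)) Finset.univ_nonempty (n := m)
      (by rw [hB₀card, Finset.card_univ, Fintype.card_bool])
    obtain ⟨B, hB, hBcard⟩ := Finset.exists_subset_card_eq hε
    refine ⟨B, hB.trans ((Finset.filter_subset _ _).trans hB₀A), hBcard, ε, fun S hSB hS => ?_⟩
    have hne : S.Nonempty := Finset.card_pos.mp (by omega)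
    rw [hf S (hSB.trans (hB.trans (Finset.filter_subset _ _))) hne hS]
    exact (Finset.mem_filter.mp (hB (hSB (S.min'_mem hne)))).2

theorem Creature2.ext {x y : Creature2} (hmdn : x.mdn = y.mdn) (hmup : x.mup = y.mup)
    (hdis : x.dis = y.dis) (hval : x.val = y.val) : x = y := by
  cases x; cases y
  subst hmdn hmup hdis hval
  simp_all

noncomputable def Creature2.widen (y : Creature2) (a b : ℕ) (S : Finset (ℕ → Option ℕ))
    (ha : a ≤ y.mdn) (hb : y.mup ≤ b) (hS : S ⊆ y.val) (hne : S.Nonempty) : Creature2 where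
  mdn := a
  mup := b
  hm := ha.trans_lt (y.hm.trans_le hb)
  dis := y.dis
  hdisne := y.hdisne
  hdis := y.hdis.trans (Finset.Ico_subset_Ico ha hb)
  val := S
  hvalne := hne
  hdom f hf := y.hdom f (hS hf)
  hran f hf := y.hran f (hS hf)
  nor := Real.logb 2 S.card
  hnor := rfl

/-- A creature is determined by its frame, domain and values, so a colouring of creatures is a
colouring of such quadruples. -/

noncomputable def colorOf (c : Creature2 → Bool) (a b : ℕ) (D : Finset ℕ)
    (S : Finset (ℕ → Option ℕ)) : Bool :=
  open Classical in
  if h : ∃ x : Creature2, x.mdn = a ∧ x.mup = b ∧ x.dis = D ∧ x.val = S then c h.choose else false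

theorem colorOf_eq (c : Creature2 → Bool) (x : Creature2) :
    colorOf c x.mdn x.mup x.dis x.val = c x := by
  have h : ∃ y : Creature2, y.mdn = x.mdn ∧ y.mup = x.mup ∧ y.dis = x.dis ∧ y.val = x.val :=
    ⟨x, rfl, rfl, rfl, rfl⟩
  obtain ⟨h1, h2, h3, h4⟩ := h.choose_spec
  rw [colorOf, dif_pos h, Creature2.ext h1 h2 h3 h4]

theorem mem_Sigma2_Icc {s : ℕ → Creature2} {a b : ℕ} {x : Creature2} (hab : a ≤ b) :
    x ∈ Sigma2 s (Finset.Icc a b) ↔ x.mdn = (s a).mdn ∧ x.mup = (s b).mup ∧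
      ∃ l ∈ Finset.Icc a b, x.dis = (s l).dis ∧ x.val ⊆ (s l).val := by
  have hne : (Finset.Icc a b).Nonempty := Finset.nonempty_Icc.mpr hab
  have hmin : (Finset.Icc a b).min' hne = a :=
    le_antisymm (Finset.min'_le _ _ (Finset.left_mem_Icc.mpr hab))
      (Finset.le_min' _ _ _ fun y hy => (Finset.mem_Icc.mp hy).1)
  have hmax : (Finset.Icc a b).max' hne = b :=
    le_antisymm (Finset.max'_le _ _ _ fun y hy => (Finset.mem_Icc.mp hy).2)
      (Finset.le_max' _ _ (Finset.right_mem_Icc.mpr hab))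
  simp only [Sigma2, Set.mem_ofPred_eq, hne, exists_true_left, hmin, hmax]

theorem strictMono_mdn {s : ℕ → Creature2} (hs : ∀ n, (s n).mup ≤ (s (n + 1)).mdn) :
    StrictMono fun n => (s n).mdn :=
  strictMono_nat_of_lt_succ fun n => (s n).hm.trans_le (hs n)

theorem monotone_mup {s : ℕ → Creature2} (hs : ∀ n, (s n).mup ≤ (s (n + 1)).mdn) :
    Monotone fun n => (s n).mup :=
  monotone_nat_of_le_succ fun n => (hs n).trans (s (n + 1)).hm.le

theorem mup_le_mdn_of_lt {s : ℕ → Creature2} (hs : ∀ n, (s n).mup ≤ (s (n + 1)).mdn) {a b : ℕ}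
    (hab : a < b) : (s a).mup ≤ (s b).mdn :=
  (hs a).trans ((strictMono_mdn hs).monotone hab)

theorem R2cond_of_chain {s : ℕ → Creature2} (hs : ∀ n, (s n).mup ≤ (s (n + 1)).mdn)
    (hcard : ∀ l, (s l).val.card = l + 1) : R2cond s := by
  refine ⟨⟨hs, ?_⟩, hcard⟩
  have hnor : (fun n => (s n).nor) = fun n : ℕ => Real.logb 2 ((n + 1 : ℕ) : ℝ) := by
    funext n; rw [(s n).hnor, hcard]
  rw [hnor]
  exact (Real.tendsto_logb_atTop one_lt_two).comp
    (tendsto_natCast_atTop_atTop.comp (tendsto_add_atTop_nat 1))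

theorem le2_of_mem_Sigma2_Icc {t s : ℕ → Creature2} {lo hi : ℕ → ℕ} (hle : ∀ i, lo i ≤ hi i)
    (hlt : ∀ i, hi i < lo (i + 1)) (hmem : ∀ i, t i ∈ Sigma2 s (Finset.Icc (lo i) (hi i))) :
    le2 t s := by
  refine ⟨fun i => Finset.Icc (lo i) (hi i), fun i => Finset.nonempty_Icc.mpr (hle i),
    fun i a ha b hb => ?_, hmem⟩
  have := hlt i
  have := (Finset.mem_Icc.mp ha).2
  have := (Finset.mem_Icc.mp hb).1
  omega

theorem mem_X2 {v : ℕ → Creature2} {k j : ℕ} {x : Creature2} (hx : x ∈ X2 v k j) :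
    x.val.card = k - 1 + 1 ∧ ∃ l n, j ≤ l ∧ l ≤ n ∧ x.mdn = (v j).mdn ∧ x.mup = (v n).mup ∧
      x.dis = (v l).dis ∧ x.val ⊆ (v l).val := by
  obtain ⟨⟨s, hs, -, -, rfl⟩, n, hjn, hmem⟩ := hx
  obtain ⟨hmdn, hmup, l, hl, hdis, hval⟩ := (mem_Sigma2_Icc hjn).mp hmem
  obtain ⟨hjl, hln⟩ := Finset.mem_Icc.mp hl
  exact ⟨hs.2 _, l, n, hjl, hln, hmdn, hmup, hdis, hval⟩

theorem Ultrafilter.exists_eventually_eq {α β : Type*} [Finite β] (U : Ultrafilter α)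
    (f : α → β) : ∃ b, ∀ᶠ x in U, f x = b := by
  obtain ⟨b, hb⟩ := (U.map f).eq_pure_of_finite
  exact ⟨b, show ({b} : Set β) ∈ U.map f by rw [hb]; exact Set.mem_singleton b⟩

theorem exists_color_frequently_homogeneous {α : Type*} (W : ℕ → Finset α)
    (hW : Tendsto (fun p => (W p).card) atTop atTop) (D : ℕ → Finset α → Bool) (k : ℕ) :
    ∃ ε, ∀ m, ∃ᶠ p in atTop, ∃ V ⊆ W p, V.card = m ∧ ∀ S ⊆ V, S.card = k → D p S = ε := by
  let Hom := fun (ε : Bool) (m p : ℕ) =>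
    ∃ V ⊆ W p, V.card = m ∧ ∀ S ⊆ V, S.card = k → D p S = ε
  have hmono : ∀ ε p {m m'}, m ≤ m' → Hom ε m' p → Hom ε m p := by
    rintro ε p m m' hm ⟨V, hVW, hVcard, hV⟩
    obtain ⟨V', hV'V, hV'card⟩ := Finset.exists_subset_card_eq (hVcard.ge.trans' hm)
    exact ⟨V', hV'V.trans hVW, hV'card, fun S hS => hV S (hS.trans hV'V)⟩
  have hfreq : ∀ m, (∃ᶠ p in atTop, Hom true m p) ∨ ∃ᶠ p in atTop, Hom false m p := by
    intro m
    obtain ⟨N, hN⟩ := exists_ramseyArrow α k m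
    rw [← frequently_or_distrib]
    refine ((tendsto_atTop.mp hW N).mono fun p hp => ?_).frequently
    obtain ⟨V, hVW, hVcard, ε, hε⟩ := hN (W p) (D p) hp
    cases ε
    · exact Or.inr ⟨V, hVW, hVcard, hε⟩
    · exact Or.inl ⟨V, hVW, hVcard, hε⟩
  by_cases htrue : ∀ m, ∃ᶠ p in atTop, Hom true m p
  · exact ⟨true, htrue⟩
  · obtain ⟨m₀, hm₀⟩ := not_forall.mp htrue
    refine ⟨false, fun m => ?_⟩
    have hfalse := (hfreq (max m m₀)).resolve_left fun h =>
      hm₀ (h.mono fun p => hmono _ p (le_max_right _ _))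
    exact hfalse.mono fun p => hmono _ p (le_max_left _ _)

section Diagonal

variable {α : Type*} (φ : ℕ → Finset α → ℕ → Bool) (k : ℕ) (ε : Bool)

def IsMonochromaticAt (p : ℕ) (V : Finset α) (q : ℕ) : Prop :=
  ∀ S ⊆ V, S.card = k → φ p S q = ε

theorem exists_diagonal_seq (l : Filter ℕ) [l.NeBot] (hl : l ≤ atTop) (W : ℕ → Finset α)
    (j : ℕ) (hgood : ∀ m, ∃ᶠ p in atTop,
      ∃ V ⊆ W p, V.card = m ∧ ∀ᶠ q in l, IsMonochromaticAt φ k ε p V q) :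
    ∃ (p q : ℕ → ℕ) (V : ℕ → Finset α), (∀ n, j < p n) ∧ (∀ n, p n < q n) ∧
      (∀ n, q n < p (n + 1)) ∧ (∀ n, V n ⊆ W (p n)) ∧ (∀ n, (V n).card = j + n + 1) ∧
      ∀ a b, a ≤ b → IsMonochromaticAt φ k ε (p a) (V a) (q b) := by
  -- a stage `(p, V, q)` of the construction
  let P : ℕ × Finset α × ℕ → Prop := fun x =>
    j < x.1 ∧ x.1 < x.2.2 ∧ x.2.1 ⊆ W x.1 ∧ j < x.2.1.card ∧
      (∀ᶠ q in l, IsMonochromaticAt φ k ε x.1 x.2.1 q) ∧ IsMonochromaticAt φ k ε x.1 x.2.1 x.2.2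
  let r : ℕ × Finset α × ℕ → ℕ × Finset α × ℕ → Prop := fun x y =>
    x.2.2 < y.1 ∧ x.2.1.card < y.2.1.card ∧ IsMonochromaticAt φ k ε x.1 x.2.1 y.2.2
  obtain ⟨f, hP, hr⟩ := exists_seq_of_forall_finset_exists P r <| by
    intro s hs
    set B := j + ∑ x ∈ s, (x.2.2 + x.2.1.card)
    have hB : ∀ x ∈ s, x.2.2 + x.2.1.card ≤ B := fun x hx =>
      (Finset.single_le_sum (f := fun x => x.2.2 + x.2.1.card) (fun _ _ => Nat.zero_le _)
        hx).trans (Nat.le_add_left _ _)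
    obtain ⟨p, ⟨V, hVW, hVcard, hV⟩, hBp⟩ :=
      ((hgood (B + 1)).and_eventually (eventually_gt_atTop B)).exists
    obtain ⟨q, hqs, hqV, hpq⟩ := (((eventually_all_finset s).2 fun x hx => (hs x hx).2.2.2.2.1).and
      (hV.and ((eventually_gt_atTop p).filter_mono hl))).exists
    refine ⟨(p, V, q), ⟨show j < p by omega, hpq, hVW, show j < V.card by omega, hV, hqV⟩,
      fun x hx => ⟨?_, ?_, hqs x hx⟩⟩
    · show x.2.2 < p
      have := hB x hx; omega
    · show x.2.1.card < V.card
      have := hB x hx; omega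
  have hcard : StrictMono fun n => (f n).2.1.card := fun m n hmn => (hr m n hmn).2.1
  have hshrink : ∀ n, ∃ V ⊆ (f n).2.1, V.card = j + n + 1 := fun n => by
    have := hcard.add_le_nat n 0
    rw [Nat.add_zero] at this
    exact Finset.exists_subset_card_eq (by have := (hP 0).2.2.2.1; omega)
  choose V hVf hVcard using hshrink
  refine ⟨fun n => (f n).1, fun n => (f n).2.2, V, fun n => (hP n).1, fun n => (hP n).2.1,
    fun n => (hr n (n + 1) n.lt_succ_self).1, fun n => (hVf n).trans (hP n).2.2.1, hVcard, ?_⟩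
  intro a b hab S hS
  rcases hab.lt_or_eq with hab | rfl
  · exact (hr a b hab).2.2 S (hS.trans (hVf a))
  · exact (hP a).2.2.2.2.2 S (hS.trans (hVf a))

end Diagonal

theorem exists_R2cond_le2_of_blocks {t : ℕ → Creature2}
    (ht : ∀ n, (t n).mup ≤ (t (n + 1)).mdn) {lo piv hi : ℕ → ℕ}
    (val : ℕ → Finset (ℕ → Option ℕ)) (hlo : ∀ i, lo i ≤ piv i) (hhi : ∀ i, piv i ≤ hi i)
    (hsep : ∀ i, hi i < lo (i + 1)) (hval : ∀ i, val i ⊆ (t (piv i)).val)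
    (hcard : ∀ i, (val i).card = i + 1) :
    ∃ s, R2cond s ∧ le2 s t ∧ ∀ i, (s i).mdn = (t (lo i)).mdn ∧ (s i).mup = (t (hi i)).mup ∧
      (s i).dis = (t (piv i)).dis ∧ (s i).val = val i := by
  let s i := (t (piv i)).widen (t (lo i)).mdn (t (hi i)).mup (val i)
    ((strictMono_mdn ht).monotone (hlo i)) (monotone_mup ht (hhi i)) (hval i)
    (Finset.card_pos.mp (by rw [hcard]; omega))
  refine ⟨s, R2cond_of_chain (fun i => mup_le_mdn_of_lt ht (hsep i)) hcard,
    le2_of_mem_Sigma2_Icc (fun i => (hlo i).trans (hhi i)) hsep fun i => ?_,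
    fun i => ⟨rfl, rfl, rfl, rfl⟩⟩
  exact (mem_Sigma2_Icc ((hlo i).trans (hhi i))).mpr
    ⟨rfl, rfl, piv i, Finset.mem_Icc.mpr ⟨hlo i, hhi i⟩, rfl, hval i⟩

theorem exists_R2cond_le2_agreeing_below {t : ℕ → Creature2} (ht : R2cond t) {j : ℕ}
    {p q : ℕ → ℕ} {V : ℕ → Finset (ℕ → Option ℕ)} (hjp : j ≤ p 0) (hpq : ∀ n, p n < q n)
    (hqp : ∀ n, q n < p (n + 1)) (hVt : ∀ n, V n ⊆ (t (p n)).val)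
    (hVcard : ∀ n, (V n).card = j + n + 1) :
    ∃ s, R2cond s ∧ le2 s t ∧ restr2 s j = restr2 t j ∧ (s j).mdn = (t j).mdn ∧
      ∀ n, (s (j + n)).mup = (t (q n)).mup ∧ (s (j + n)).dis = (t (p n)).dis ∧
        (s (j + n)).val = V n := by
  obtain ⟨s, hs, hst, hfields⟩ := exists_R2cond_le2_of_blocks ht.1.1
    (lo := fun i => if i ≤ j then i else p (i - j))
    (piv := fun i => if i < j then i else p (i - j))
    (hi := fun i => if i < j then i else q (i - j))
    (fun i => if i < j then (t i).val else V (i - j))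
    (fun i => by
      rcases lt_or_ge i j with h | h
      · simp [h, h.le]
      · obtain ⟨n, rfl⟩ := Nat.exists_eq_add_of_le h
        rcases n with _ | n <;> simp [hjp])
    (fun i => by
      rcases lt_or_ge i j with h | h
      · simp [h]
      · simp [h.not_gt, (hpq _).le])
    (fun i => by
      rcases lt_or_ge i j with h | h
      · simp [h, Nat.succ_le_of_lt h]
      · obtain ⟨n, rfl⟩ := Nat.exists_eq_add_of_le h
        simp [add_assoc, hqp])
    (fun i => by
      rcases lt_or_ge i j with h | h
      · simp [h]
      · simp [h.not_gt, hVt])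
    (fun i => by
      rcases lt_or_ge i j with h | h
      · simp [h, ht.2]
      · simp only [h.not_gt, ↓reduceIte, hVcard, Nat.add_right_cancel_iff]; omega)
  refine ⟨s, hs, hst, ?_, by simp [(hfields j).1], fun n => by simp [hfields]⟩
  refine congrArg List.ofFn (funext fun i => Creature2.ext ?_ ?_ ?_ ?_) <;>
    simp [hfields, i.2]

theorem exists_monochromatic_diagonal {α : Type*} (φ : ℕ → Finset α → ℕ → Bool) (k : ℕ)
    (W : ℕ → Finset α) (hW : Tendsto (fun p => (W p).card) atTop atTop) (j : ℕ) :
    ∃ (ε : Bool) (p q : ℕ → ℕ) (V : ℕ → Finset α), (∀ n, j < p n) ∧ (∀ n, p n < q n) ∧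
      (∀ n, q n < p (n + 1)) ∧ (∀ n, V n ⊆ W (p n)) ∧ (∀ n, (V n).card = j + n + 1) ∧
      ∀ a b, a ≤ b → IsMonochromaticAt φ k ε (p a) (V a) (q b) := by
  -- colour `(p, S)` by the limit of `φ p S q` along a nonprincipal ultrafilter
  let U := hyperfilter ℕ
  choose D hD using fun p S => U.exists_eventually_eq (φ p S)
  obtain ⟨ε, hε⟩ := exists_color_frequently_homogeneous W hW D k
  refine ⟨ε, exists_diagonal_seq φ k ε U (hyperfilter_le_cofinite.trans Nat.cofinite_eq_atTop.le)
    W j fun m => (hε m).mono ?_⟩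
  rintro p ⟨V, hVW, hVcard, hV⟩
  refine ⟨V, hVW, hVcard, ?_⟩
  filter_upwards [(eventually_all_finset V.powerset).2 fun S _ => hD p S] with q hq S hS hSk
  rw [hq S (Finset.mem_powerset.mpr hS), hV S hS hSk]

theorem stmt14_general (k : ℕ) (t : ℕ → Creature2) (ht : R2cond t)
    (j : ℕ) (c' : Creature2 → Bool) :
    ∃ tj : ℕ → Creature2, R2cond tj ∧ le2 tj t ∧ restr2 tj j = restr2 t j ∧
      ∃ ε : Bool, ∀ x ∈ X2 tj k j, c' x = ε := by
  obtain ⟨ε, p, q, V, hjp, hpq, hqp, hVt, hVcard, hmono⟩ := exists_monochromatic_diagonal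
    (fun p S q => colorOf c' (t j).mdn (t q).mup (t p).dis S) (k - 1 + 1) (fun p => (t p).val)
    (by simpa only [ht.2] using tendsto_add_atTop_nat 1) j
  obtain ⟨s, hs, hst, hres, hmdn, hfields⟩ :=
    exists_R2cond_le2_agreeing_below ht (hjp 0).le hpq hqp hVt hVcard
  refine ⟨s, hs, hst, hres, ε, fun x hx => ?_⟩
  obtain ⟨hxcard, l, n, hjl, hln, hxmdn, hxmup, hxdis, hxval⟩ := mem_X2 hx
  obtain ⟨a, rfl⟩ := Nat.exists_eq_add_of_le hjl
  obtain ⟨b, rfl⟩ := Nat.exists_eq_add_of_le (hjl.trans hln)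
  obtain ⟨-, hdis, hval⟩ := hfields a
  rw [← colorOf_eq c' x, hxmdn, hmdn, hxmup, (hfields b).1, hxdis, hdis]
  exact hmono a b (by omega) x.val (hval ▸ hxval) hxcard

theorem stmt14 (k : ℕ) (hk : 1 ≤ k) (t : ℕ → Creature2) (ht : R2cond t)
    (j : ℕ) (hj : k - 1 ≤ j) (c' : Creature2 → Bool) :
    ∃ tj : ℕ → Creature2, R2cond tj ∧ le2 tj t ∧ restr2 tj j = restr2 t j ∧
      ∃ ε : Bool, ∀ x ∈ X2 tj k j, c' x = ε :=
  stmt14_general k t ht j c'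
end
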